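/- arXiv:0711.4236 — 8 statements merged into one kernel-verified Lean document; each statement's English description precedes it below -/
import Mathlib

section
/- Let s₀ > 0 and let n be analytic on ℂ∖ℝ with n(conj z) = conj(n(z)) and n(z) ≠ 0 for all nonreal z, and define ñ(z) = −s₀/n(z) − z. Then n is a Nevanlinna function satisfying lim_{y→±∞} (iy)·n(iy) = −s₀ (condition (1₀)) if and only if ñ is a Nevanlinna function satisfying lim_{y→±∞} ñ(iy)/y = 0. -/
/-!
The forward direction is a Julia-type estimate at infinity. Condition (1₀) forces `n` to be
nonconstant, so by the open mapping theorem `Im n > 0` on the upper half plane, and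
`v = -s₀ / n = ñ + id` is a holomorphic self-map of the upper half plane with `v(iy)/y → i`.
The Schwarz–Pick inequality `|v z - v w|² Im z Im w ≤ |z - w|² Im v(z) Im v(w)` at `w = iy`,
divided by `y³`, yields `Im z ≤ Im v(z)` as `y → ∞`, that is `Im ñ(z) ≥ 0`. Conversely
`n = -s₀ / (ñ + id)` and `Im (ñ(z) + z) > 0`.
-/

open Filter Complex

noncomputable section

/-- A Nevanlinna function: analytic on `ℂ ∖ ℝ`, symmetric with respect to conjugation,
and with non-negative imaginary part in the upper half plane. -/
def IsNevanlinna (n : ℂ → ℂ) : Prop :=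
  AnalyticOn ℂ n {z : ℂ | z.im ≠ 0} ∧
  (∀ z : ℂ, z.im ≠ 0 → n ((starRingEnd ℂ) z) = (starRingEnd ℂ) (n z)) ∧
  (∀ z : ℂ, 0 < z.im → 0 ≤ (n z).im)

open Set Metric Topology ComplexConjugate

local notation "ℍₒ" => UpperHalfPlane.upperHalfPlaneSet

lemma norm_sub_conj_sq (a b : ℂ) : ‖a - conj b‖ ^ 2 = ‖a - b‖ ^ 2 + 4 * a.im * b.im := by
  simp only [Complex.sq_norm, normSq_apply, sub_re, sub_im, conj_re, conj_im]
  ring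

lemma sub_conj_ne_zero {a b : ℂ} (ha : 0 < a.im) (hb : 0 < b.im) : a - conj b ≠ 0 := by
  intro h
  have := congrArg im h
  simp only [sub_im, conj_im, zero_im] at this
  linarith

lemma im_neg_ofReal_div_pos {s : ℝ} (hs : 0 < s) {w : ℂ} (hw : 0 < w.im) :
    0 < (-(s : ℂ) / w).im := by
  have hw0 : w ≠ 0 := fun h => by simp [h] at hw
  calc 0 < s * w.im / normSq w := div_pos (mul_pos hs hw) (normSq_pos.mpr hw0)
    _ = (-(s : ℂ) / w).im := by
      simp only [neg_div, neg_im, div_im, ofReal_re, ofReal_im]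
      ring

def halfPlaneToDisk (w z : ℂ) : ℂ := (z - w) / (z - conj w)

def diskToHalfPlane (w ζ : ℂ) : ℂ := (w - conj w * ζ) / (1 - ζ)

section Cayley

variable {w : ℂ}

@[simp] lemma halfPlaneToDisk_self : halfPlaneToDisk w w = 0 := by simp [halfPlaneToDisk]

@[simp] lemma diskToHalfPlane_zero : diskToHalfPlane w 0 = w := by simp [diskToHalfPlane]

lemma mapsTo_halfPlaneToDisk (hw : w ∈ ℍₒ) : MapsTo (halfPlaneToDisk w) ℍₒ (ball 0 1) := by
  intro z (hz : 0 < z.im)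
  rw [mem_ball_zero_iff, halfPlaneToDisk, norm_div,
    div_lt_one (norm_pos_iff.mpr (sub_conj_ne_zero hz hw)),
    ← sq_lt_sq₀ (norm_nonneg _) (norm_nonneg _), norm_sub_conj_sq]
  nlinarith [mul_pos hz (show 0 < w.im from hw)]

lemma mapsTo_diskToHalfPlane (hw : w ∈ ℍₒ) : MapsTo (diskToHalfPlane w) (ball 0 1) ℍₒ := by
  intro ζ hζ
  rw [mem_ball_zero_iff] at hζ
  have hζ1 : 1 - ζ ≠ 0 := fun h => by simp [← sub_eq_zero.mp h] at hζ
  have him : (diskToHalfPlane w ζ).im = w.im * (1 - normSq ζ) / normSq (1 - ζ) := by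
    rw [diskToHalfPlane, div_im]
    field_simp
    simp only [normSq_apply, sub_re, sub_im, mul_re, mul_im, conj_re, conj_im, one_re, one_im]
    ring
  have hζ' : normSq ζ < 1 := by rw [← Complex.sq_norm]; nlinarith [norm_nonneg ζ]
  show 0 < (diskToHalfPlane w ζ).im
  rw [him]
  exact div_pos (mul_pos hw (by linarith)) (normSq_pos.mpr hζ1)

lemma differentiableOn_halfPlaneToDisk (hw : w ∈ ℍₒ) :
    DifferentiableOn ℂ (halfPlaneToDisk w) ℍₒ :=
  DifferentiableOn.div (by fun_prop) (by fun_prop) fun _ hz => sub_conj_ne_zero hz hw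

lemma differentiableOn_diskToHalfPlane : DifferentiableOn ℂ (diskToHalfPlane w) (ball 0 1) :=
  DifferentiableOn.div (by fun_prop) (by fun_prop) fun ζ hζ h => by
    simp [← sub_eq_zero.mp h] at hζ

lemma diskToHalfPlane_halfPlaneToDisk (hw : w ∈ ℍₒ) {z : ℂ} (hz : z ∈ ℍₒ) :
    diskToHalfPlane w (halfPlaneToDisk w z) = z := by
  have hd := sub_conj_ne_zero hz hw
  have hw' := sub_conj_ne_zero hw hw
  rw [diskToHalfPlane, halfPlaneToDisk, one_sub_div hd, sub_sub_sub_cancel_left,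
    div_div_eq_mul_div, div_eq_iff hw']
  field_simp
  ring

end Cayley

lemma tendsto_const_div_ofReal_atTop (a : ℂ) : Tendsto (fun y : ℝ => a / y) atTop (𝓝 0) := by
  simpa [div_eq_mul_inv] using (tendsto_inv₀_cobounded.comp
    (RCLike.tendsto_ofReal_atTop_cobounded ℂ)).const_mul a

section SchwarzPick

variable {v : ℂ → ℂ}

theorem norm_halfPlaneToDisk_comp_le (hv : DifferentiableOn ℂ v ℍₒ) (hv_maps : MapsTo v ℍₒ ℍₒ)
    {z w : ℂ} (hz : z ∈ ℍₒ) (hw : w ∈ ℍₒ) :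
    ‖halfPlaneToDisk (v w) (v z)‖ ≤ ‖halfPlaneToDisk w z‖ := by
  have hmaps_v := hv_maps.comp (mapsTo_diskToHalfPlane hw)
  have hmaps := (mapsTo_halfPlaneToDisk (hv_maps hw)).comp hmaps_v
  have hdiff := (differentiableOn_halfPlaneToDisk (hv_maps hw)).comp
    (hv.comp differentiableOn_diskToHalfPlane (mapsTo_diskToHalfPlane hw)) hmaps_v
  have := Complex.norm_le_norm_of_mapsTo_ball hdiff (hmaps.mono_right ball_subset_closedBall)
    (by simp) (mem_ball_zero_iff.mp (mapsTo_halfPlaneToDisk hw hz))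
  simpa [diskToHalfPlane_halfPlaneToDisk hw hz] using this

theorem norm_sub_sq_mul_im_mul_im_le (hv : DifferentiableOn ℂ v ℍₒ) (hv_maps : MapsTo v ℍₒ ℍₒ)
    {z w : ℂ} (hz : z ∈ ℍₒ) (hw : w ∈ ℍₒ) :
    ‖v z - v w‖ ^ 2 * (z.im * w.im) ≤ ‖z - w‖ ^ 2 * ((v z).im * (v w).im) := by
  have h := norm_halfPlaneToDisk_comp_le hv hv_maps hz hw
  rw [halfPlaneToDisk, halfPlaneToDisk, norm_div, norm_div,
    div_le_div_iff₀ (norm_pos_iff.mpr (sub_conj_ne_zero (hv_maps hz) (hv_maps hw)))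
      (norm_pos_iff.mpr (sub_conj_ne_zero hz hw))] at h
  have h2 := pow_le_pow_left₀ (by positivity) h 2
  rw [mul_pow, mul_pow, norm_sub_conj_sq, norm_sub_conj_sq] at h2
  nlinarith

theorem im_le_im_of_tendsto_div (hv : DifferentiableOn ℂ v ℍₒ) (hv_maps : MapsTo v ℍₒ ℍₒ)
    (hlim : Tendsto (fun y : ℝ => v (I * y) / y) atTop (𝓝 I))
    {z : ℂ} (hz : z ∈ ℍₒ) : z.im ≤ (v z).im := by
  have hle : ∀ᶠ y : ℝ in atTop, ‖v z / y - v (I * y) / y‖ ^ 2 * z.im ≤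
      ‖z / y - I‖ ^ 2 * ((v z).im * ((v (I * y)).im / y)) := by
    filter_upwards [eventually_gt_atTop 0] with y hy
    have hIy : I * y ∈ ℍₒ := by simpa using hy
    have hy0 : (y : ℂ) ≠ 0 := by exact_mod_cast hy.ne'
    have hnorm : ‖(y : ℂ)‖ = y := Complex.norm_of_nonneg hy.le
    have hSP := norm_sub_sq_mul_im_mul_im_le hv hv_maps hz hIy
    simp only [mul_im, I_re, I_im, ofReal_re, ofReal_im] at hSP
    calc ‖v z / y - v (I * y) / y‖ ^ 2 * z.im
        = ‖v z - v (I * y)‖ ^ 2 * (z.im * y) / y ^ 3 := by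
          rw [div_sub_div_same, norm_div, hnorm]; field_simp
      _ ≤ ‖z - I * y‖ ^ 2 * ((v z).im * (v (I * y)).im) / y ^ 3 := by
          exact div_le_div_of_nonneg_right (by simpa using hSP) (by positivity)
      _ = ‖z / y - I‖ ^ 2 * ((v z).im * ((v (I * y)).im / y)) := by
          rw [show z / y - I = (z - I * y) / y by field_simp, norm_div, hnorm]; field_simp
  have hlhs : Tendsto (fun y : ℝ => ‖v z / y - v (I * y) / y‖ ^ 2 * z.im) atTop
      (𝓝 (‖0 - I‖ ^ 2 * z.im)) :=
    (((tendsto_const_div_ofReal_atTop _).sub hlim).norm.pow 2).mul_const _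
  have hrhs : Tendsto (fun y : ℝ => ‖z / y - I‖ ^ 2 * ((v z).im * ((v (I * y)).im / y))) atTop
      (𝓝 (‖0 - I‖ ^ 2 * ((v z).im * I.im))) :=
    (((tendsto_const_div_ofReal_atTop _).sub_const I).norm.pow 2).mul
      (tendsto_const_nhds.mul
        (by simpa [Function.comp_def] using (continuous_im.tendsto I).comp hlim))
  simpa using le_of_tendsto_of_tendsto hlhs hrhs hle

end SchwarzPick

lemma eqOn_const_or_mapsTo_upperHalfPlane {f : ℂ → ℂ} (hf : AnalyticOnNhd ℂ f ℍₒ)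
    (hf_im : MapsTo f ℍₒ {w | 0 ≤ w.im}) : (∃ c, ∀ z ∈ ℍₒ, f z = c) ∨ MapsTo f ℍₒ ℍₒ := by
  refine (hf.is_constant_or_isOpen (convex_halfSpace_im_gt 0).isPreconnected).imp_right
    fun hopen => ?_
  have := (hopen _ subset_rfl UpperHalfPlane.isOpen_upperHalfPlaneSet).subset_interior_iff.mpr
    hf_im.image_subset
  rwa [interior_setOfPred_le_im, ← mapsTo_iff_image_subset] at this

lemma not_tendsto_I_mul_mul_const {c : ℂ} (hc : c ≠ 0) (a : ℂ) :
    ¬ Tendsto (fun y : ℝ => I * y * c) atTop (𝓝 a) := fun h => by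
  have h_re := (continuous_re.tendsto _).comp (h.div_const (I * c))
  have hid : (re ∘ fun y : ℝ => I * y * c / (I * c)) = id := by
    funext y
    rw [Function.comp_apply, show I * y * c = y * (I * c) by ring,
      mul_div_cancel_right₀ _ (mul_ne_zero I_ne_zero hc), ofReal_re, id]
  rw [hid] at h_re
  exact not_tendsto_nhds_of_tendsto_atTop tendsto_id _ h_re

lemma tendsto_mul_div_sub_one_iff {α 𝕜 : Type*} [NormedField 𝕜] {l : Filter α} {f : α → 𝕜}
    {a c : 𝕜} (ha : a ≠ 0) (hc : c ≠ 0) :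
    Tendsto (fun x => a * (c / f x - 1)) l (𝓝 0) ↔ Tendsto f l (𝓝 c) := by
  refine ⟨fun h => ?_, fun h => ?_⟩
  · have h1 : Tendsto (fun x => c / f x) l (𝓝 1) := by
      simpa [inv_mul_cancel_left₀ ha] using (h.const_mul a⁻¹).add_const 1
    have h2 := (tendsto_const_nhds (x := c)).div h1 one_ne_zero
    rw [div_one] at h2
    exact h2.congr fun x => div_div_cancel₀ hc
  · have h1 := (((tendsto_const_nhds (x := c)).div h hc).sub_const 1).const_mul a
    rwa [div_self hc, sub_self, mul_zero] at h1

lemma tendsto_I_mul_mul_iff_tendsto_div {s₀ : ℝ} (hs : -(s₀ : ℂ) ≠ 0) {n nt : ℂ → ℂ}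
    (hne : ∀ z : ℂ, z.im ≠ 0 → n z ≠ 0) (hnt : ∀ z : ℂ, nt z = -(s₀ : ℂ) / n z - z)
    {l : Filter ℝ} (hl : ∀ᶠ y in l, y ≠ 0) :
    Tendsto (fun y : ℝ => I * y * n (I * y)) l (𝓝 (-s₀)) ↔
      Tendsto (fun y : ℝ => nt (I * y) / y) l (𝓝 0) := by
  rw [← tendsto_mul_div_sub_one_iff I_ne_zero hs]
  refine tendsto_congr' ?_
  filter_upwards [hl] with y hy
  have hy0 : (y : ℂ) ≠ 0 := by exact_mod_cast hy
  have hn0 : n (I * y) ≠ 0 := hne _ (by simpa using hy)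
  -- `ñ(iy)/y = i (-s₀/(iy n(iy)) - 1)`
  rw [hnt]
  field_simp

lemma im_le_im_neg_div_of_tendsto {s₀ : ℝ} (hs₀ : 0 < s₀) {n : ℂ → ℂ}
    (hn : AnalyticOnNhd ℂ n ℍₒ) (hne : ∀ z ∈ ℍₒ, n z ≠ 0) (hn_im : MapsTo n ℍₒ {w | 0 ≤ w.im})
    (hlim : Tendsto (fun y : ℝ => I * y * n (I * y)) atTop (𝓝 (-s₀))) {z : ℂ} (hz : z ∈ ℍₒ) :
    z.im ≤ (-(s₀ : ℂ) / n z).im := by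
  have hs : -(s₀ : ℂ) ≠ 0 := by simpa using hs₀.ne'
  obtain ⟨c, hc⟩ | hn_pos := eqOn_const_or_mapsTo_upperHalfPlane hn hn_im
  · have hI : I ∈ ℍₒ := by simp
    refine absurd (hlim.congr' ?_) (not_tendsto_I_mul_mul_const (hc I hI ▸ hne I hI) _)
    filter_upwards [eventually_gt_atTop 0] with y hy
    rw [hc _ (by simpa using hy)]
  refine im_le_im_of_tendsto_div (v := fun z => -(s₀ : ℂ) / n z)
    ((differentiableOn_const _).div hn.differentiableOn hne)
    (fun w hw => im_neg_ofReal_div_pos hs₀ (hn_pos hw)) ?_ hz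
  have h := ((tendsto_const_nhds (x := -(s₀ : ℂ))).div hlim hs).const_mul I
  rw [div_self hs, mul_one] at h
  refine h.congr' ?_
  filter_upwards [eventually_gt_atTop 0] with y hy
  have hy0 : (y : ℂ) ≠ 0 := by exact_mod_cast hy.ne'
  have hn0 : n (I * y) ≠ 0 := hne _ (by simpa using hy)
  simp only [Pi.div_apply]
  field_simp

/-- for `ñ(z) = -s₀/n(z) - z`, the function `n` is a Nevanlinna function
satisfying condition (1₀) (i.e. `(iy)·n(iy) → -s₀` as `y → ±∞`) if and only if `ñ` is a
Nevanlinna function with `ñ(iy)/y → 0` as `y → ±∞`. -/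
theorem schur_type_transform_cond_one_zero (s₀ : ℝ) (hs₀ : 0 < s₀) (n : ℂ → ℂ)
    (hanal : AnalyticOn ℂ n {z : ℂ | z.im ≠ 0})
    (hsym : ∀ z : ℂ, z.im ≠ 0 → n ((starRingEnd ℂ) z) = (starRingEnd ℂ) (n z))
    (hne : ∀ z : ℂ, z.im ≠ 0 → n z ≠ 0)
    (nt : ℂ → ℂ) (hnt : ∀ z : ℂ, nt z = -(s₀ : ℂ) / n z - z) :
    (IsNevanlinna n ∧
        Tendsto (fun y : ℝ => (Complex.I * y) * n (Complex.I * y))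
          (atTop ⊔ atBot) (nhds (-(s₀ : ℂ)))) ↔
      (IsNevanlinna nt ∧
        Tendsto (fun y : ℝ => nt (Complex.I * y) / (y : ℂ))
          (atTop ⊔ atBot) (nhds 0)) := by
  have hs : -(s₀ : ℂ) ≠ 0 := by simpa using hs₀.ne'
  have hn : AnalyticOnNhd ℂ n {z : ℂ | z.im ≠ 0} :=
    (isOpen_ne_fun continuous_im continuous_const).analyticOn_iff_analyticOnNhd.mp hanal
  have hnt_anal : AnalyticOn ℂ nt {z : ℂ | z.im ≠ 0} := by
    rw [funext hnt]
    exact ((analyticOnNhd_const.div hn hne).sub analyticOnNhd_id).analyticOn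
  have hnt_sym : ∀ z : ℂ, z.im ≠ 0 → nt (conj z) = conj (nt z) := fun z hz => by
    rw [hnt, hnt, hsym z hz, map_sub, map_div₀, map_neg, conj_ofReal]
  have hlim_iff := tendsto_I_mul_mul_iff_tendsto_div hs hne hnt
    (eventually_sup.mpr ⟨eventually_ne_atTop 0, eventually_ne_atBot 0⟩)
  constructor
  · rintro ⟨⟨-, -, hn_im⟩, hlim⟩
    refine ⟨⟨hnt_anal, hnt_sym, fun z hz => ?_⟩, hlim_iff.mp hlim⟩
    have := im_le_im_neg_div_of_tendsto hs₀ (hn.mono fun z hz => ne_of_gt hz)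
      (fun z hz => hne z (ne_of_gt hz)) hn_im (hlim.mono_left le_sup_left) hz
    rw [hnt, sub_im]
    linarith
  · rintro ⟨⟨-, -, hnt_im⟩, hlim⟩
    refine ⟨⟨hanal, hsym, fun z hz => ?_⟩, hlim_iff.mpr hlim⟩
    have hpos : 0 < (nt z + z).im := by rw [add_im]; linarith [hnt_im z hz]
    rw [show n z = -(s₀ : ℂ) / (nt z + z) by rw [hnt, sub_add_cancel, div_div_cancel₀ hs]]
    exact (im_neg_ofReal_div_pos hs₀ hpos).le
end
end

section
/- Let s₀ > 0, s₁ ∈ ℝ, and let n be analytic on ℂ∖ℝ with n(conj z) = conj(n(z)) and n(z) ≠ 0 for all nonreal z, and define the Schur transform n̂(z) = −s₀/n(z) − z + s₁/s₀. Then n is a Nevanlinna function satisfying lim_{y→±∞} (iy)²·(n(iy) + s₀/(iy) + s₁/(iy)²) = 0 (condition (3₀)) if and only if n̂ is a Nevanlinna function satisfying lim_{y→±∞} n̂(iy) = 0. -/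
/-!
Put `m = -s₀ / n`, so that `n̂ z = m z - z + s₁ / s₀` and `Im m = s₀ Im n / |n|²`.

If `n̂` is a Nevanlinna function, then `Im m z ≥ Im z > 0` on the upper half plane, so
`Im n ≥ 0`. Conversely, if `n` is a Nevanlinna function then `m` maps the upper half plane
into its closure, and (3₀) gives `m (iy) / (iy) → 1`; this rules out a real constant, so by the
open mapping theorem `m` maps the upper half plane into itself. Julia's lemma at infinity then
gives `Im m z ≥ Im z`, i.e. `Im n̂ ≥ 0`: apply the Schwarz–Pick inequality at `w = iy`, divide
by `y³` and let `y → ∞`.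

The two limit conditions are equivalent because each of `w² (n w + s₀ / w + s₁ / w²)` and
`n̂ w` is a rational function of the other and of `1 / w` that vanishes when both vanish.
-/

open Filter Complex

noncomputable section

open Metric Topology Bornology ComplexConjugate

def cayley (w z : ℂ) : ℂ := (z - w) / (z - conj w)

def cayleyInv (w v : ℂ) : ℂ := (w - conj w * v) / (1 - v)

lemma normSq_sub_conj (a b : ℂ) :
    normSq (a - conj b) = normSq (a - b) + 4 * a.im * b.im := by
  simp only [normSq_apply, sub_re, sub_im, conj_re, conj_im]
  ring

lemma sub_conj_ne_zero_s2 {z w : ℂ} (hz : 0 < z.im) (hw : 0 < w.im) : z - conj w ≠ 0 := by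
  intro h
  have := congrArg im h
  simp only [sub_im, conj_im, zero_im] at this
  linarith

lemma cayley_mem_ball {z w : ℂ} (hz : 0 < z.im) (hw : 0 < w.im) : cayley w z ∈ ball 0 1 := by
  rw [mem_ball_zero_iff, ← sq_lt_one_iff₀ (norm_nonneg _), Complex.sq_norm, cayley, map_div₀,
    div_lt_one (normSq_pos.2 (sub_conj_ne_zero_s2 hz hw)), normSq_sub_conj]
  nlinarith

lemma cayley_self (w : ℂ) : cayley w w = 0 := by simp [cayley]

lemma differentiableOn_cayley {w : ℂ} (hw : 0 < w.im) :
    DifferentiableOn ℂ (cayley w) {z | 0 < z.im} :=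
  (differentiableOn_id.sub_const w).div (differentiableOn_id.sub_const _)
    fun _ hz => sub_conj_ne_zero_s2 hz hw

lemma one_sub_ne_zero_of_mem_ball {v : ℂ} (hv : v ∈ ball (0 : ℂ) 1) : 1 - v ≠ 0 := by
  rw [sub_ne_zero]
  rintro rfl
  simp at hv

lemma im_cayleyInv_pos {w v : ℂ} (hw : 0 < w.im) (hv : v ∈ ball 0 1) :
    0 < (cayleyInv w v).im := by
  have h1 := one_sub_ne_zero_of_mem_ball hv
  have hv1 : normSq v < 1 := by
    rw [← Complex.sq_norm, sq_lt_one_iff₀ (norm_nonneg _)]; simpa using hv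
  have hsub : cayleyInv w v - w = v * (w - conj w) / (1 - v) := by
    rw [cayleyInv]; field_simp; ring
  have hsubc : cayleyInv w v - conj w = (w - conj w) / (1 - v) := by
    rw [cayleyInv]; field_simp; ring
  have key : normSq (cayleyInv w v - w) < normSq (cayleyInv w v - conj w) := by
    rw [hsub, hsubc, map_div₀, map_div₀, map_mul]
    have : 0 < normSq (w - conj w) / normSq (1 - v) :=
      div_pos (normSq_pos.2 (sub_conj_ne_zero_s2 hw hw)) (normSq_pos.2 h1)
    rw [mul_div_assoc]
    nlinarith
  rw [normSq_sub_conj] at key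
  nlinarith

lemma cayleyInv_zero (w : ℂ) : cayleyInv w 0 = w := by simp [cayleyInv]

lemma cayleyInv_cayley {z w : ℂ} (hz : 0 < z.im) (hw : 0 < w.im) :
    cayleyInv w (cayley w z) = z := by
  have h := sub_conj_ne_zero_s2 hz hw
  have h1 := one_sub_ne_zero_of_mem_ball (cayley_mem_ball hz hw)
  rw [cayleyInv, div_eq_iff h1]
  rw [cayley] at h1 ⊢
  field_simp
  ring

lemma differentiableOn_cayleyInv (w : ℂ) : DifferentiableOn ℂ (cayleyInv w) (ball 0 1) :=
  ((differentiableOn_const w).sub (differentiableOn_id.const_mul _)).div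
    ((differentiableOn_const 1).sub differentiableOn_id) fun _ => one_sub_ne_zero_of_mem_ball

theorem norm_cayley_le_norm_cayley {f : ℂ → ℂ} (hf : DifferentiableOn ℂ f {z | 0 < z.im})
    (hm : ∀ z, 0 < z.im → 0 < (f z).im) {z w : ℂ} (hz : 0 < z.im) (hw : 0 < w.im) :
    ‖cayley (f w) (f z)‖ ≤ ‖cayley w z‖ := by
  have hmaps :
      Set.MapsTo (fun v => cayley (f w) (f (cayleyInv w v))) (ball 0 1) (closedBall 0 1) :=
    fun v hv => ball_subset_closedBall (cayley_mem_ball (hm _ (im_cayleyInv_pos hw hv)) (hm w hw))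
  have hdiff : DifferentiableOn ℂ (fun v => cayley (f w) (f (cayleyInv w v))) (ball 0 1) :=
    (differentiableOn_cayley (hm w hw)).comp (hf.comp (differentiableOn_cayleyInv w)
      fun v hv => im_cayleyInv_pos hw hv) fun v hv => hm _ (im_cayleyInv_pos hw hv)
  have := Complex.norm_le_norm_of_mapsTo_ball hdiff hmaps
    (by simp [cayleyInv_zero, cayley_self]) (mem_ball_zero_iff.1 (cayley_mem_ball hz hw))
  rwa [cayleyInv_cayley hz hw] at this

theorem im_mul_im_mul_normSq_sub_conj_le {f : ℂ → ℂ}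
    (hf : DifferentiableOn ℂ f {z | 0 < z.im}) (hm : ∀ z, 0 < z.im → 0 < (f z).im) {z w : ℂ}
    (hz : 0 < z.im) (hw : 0 < w.im) :
    z.im * w.im * normSq (f z - conj (f w)) ≤ (f z).im * (f w).im * normSq (z - conj w) := by
  have h := norm_cayley_le_norm_cayley hf hm hz hw
  rw [← sq_le_sq₀ (norm_nonneg _) (norm_nonneg _), Complex.sq_norm, Complex.sq_norm, cayley,
    cayley, map_div₀, map_div₀,
    div_le_div_iff₀ (normSq_pos.2 (sub_conj_ne_zero_s2 (hm z hz) (hm w hw)))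
      (normSq_pos.2 (sub_conj_ne_zero_s2 hz hw)), normSq_sub_conj, normSq_sub_conj (f z)] at h
  rw [normSq_sub_conj, normSq_sub_conj z]
  linarith

theorem eqOn_of_im_nonneg_of_im_eq_zero {f : ℂ → ℂ} {U : Set ℂ}
    (hf : DifferentiableOn ℂ f U) (hU : IsOpen U) (hUc : IsPreconnected U)
    (him : ∀ z ∈ U, 0 ≤ (f z).im) {z₀ : ℂ} (hz₀ : z₀ ∈ U) (h₀ : (f z₀).im = 0) :
    ∀ z ∈ U, f z = f z₀ := by
  rcases (hf.analyticOnNhd hU).is_constant_or_isOpen hUc with ⟨c, hc⟩ | hopen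
  · intro z hz
    rw [hc z hz, hc z₀ hz₀]
  · have himage : IsOpen (im '' (f '' U)) := isOpenMap_im _ (hopen U subset_rfl hU)
    have hmem : im '' (f '' U) ∈ 𝓝 0 := h₀ ▸ himage.mem_nhds ⟨f z₀, ⟨z₀, hz₀, rfl⟩, rfl⟩
    obtain ⟨t, ht, _, ⟨z, hz, rfl⟩, rfl⟩ := Filter.Eventually.exists_lt hmem
    exact absurd (him z hz) (not_le.2 ht)

lemma tendsto_I_mul_cobounded :
    Tendsto (fun y : ℝ => I * y) (atTop ⊔ atBot) (cobounded ℂ) := by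
  rw [← tendsto_norm_atTop_iff_cobounded]
  simpa using tendsto_sup.2 ⟨tendsto_abs_atTop_atTop, tendsto_abs_atBot_atTop⟩

lemma tendsto_inv_I_mul_atTop : Tendsto (fun y : ℝ => (I * y)⁻¹) atTop (𝓝 0) :=
  tendsto_inv₀_cobounded.comp (tendsto_I_mul_cobounded.mono_left le_sup_left)

theorem im_le_im_of_tendsto_div_I_mul {f : ℂ → ℂ}
    (hf : DifferentiableOn ℂ f {z | 0 < z.im}) (him : ∀ z, 0 < z.im → 0 ≤ (f z).im)
    (hlim : Tendsto (fun y : ℝ => f (I * y) / (I * y)) atTop (𝓝 1)) {z : ℂ} (hz : 0 < z.im) :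
    z.im ≤ (f z).im := by
  have hinv := tendsto_inv_I_mul_atTop
  have hpos : ∀ w, 0 < w.im → 0 < (f w).im := by
    intro w hw
    refine (him w hw).lt_of_ne' fun h₀ => ?_
    have hconst := eqOn_of_im_nonneg_of_im_eq_zero hf (isOpen_lt continuous_const continuous_im)
      (convex_halfSpace_im_gt 0).isPreconnected him hw h₀
    have hzero : Tendsto (fun y : ℝ => f (I * y) / (I * y)) atTop (𝓝 0) := by
      have h := hinv.const_mul (f w)
      rw [mul_zero] at h
      refine h.congr' ?_
      filter_upwards [eventually_gt_atTop 0] with y hy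
      rw [hconst (I * y) (by simpa using hy), div_eq_mul_inv]
    exact one_ne_zero (tendsto_nhds_unique hlim hzero)
  set g := fun y : ℝ => f (I * y) / (I * y)
  have hA : Tendsto (fun y : ℝ => normSq (f z * (I * y)⁻¹ + conj (g y))) atTop (𝓝 1) := by
    simpa [Function.comp_def] using (continuous_normSq.tendsto _).comp
      ((hinv.const_mul (f z)).add ((continuous_conj.tendsto 1).comp hlim))
  have hB : Tendsto (fun y : ℝ => normSq (z * (I * y)⁻¹ + 1)) atTop (𝓝 1) := by
    simpa [Function.comp_def] using
      (continuous_normSq.tendsto _).comp ((hinv.const_mul z).add_const 1)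
  have hre : Tendsto (fun y => (g y).re) atTop (𝓝 1) := by
    simpa [Function.comp_def] using (continuous_re.tendsto 1).comp hlim
  have hL : Tendsto (fun y : ℝ => z.im * normSq (f z * (I * y)⁻¹ + conj (g y))) atTop
      (𝓝 z.im) := by
    simpa using hA.const_mul z.im
  have hR : Tendsto (fun y : ℝ => (f z).im * (g y).re * normSq (z * (I * y)⁻¹ + 1)) atTop
      (𝓝 (f z).im) := by
    simpa using (hre.const_mul (f z).im).mul hB
  refine le_of_tendsto_of_tendsto hL hR ?_
  filter_upwards [eventually_gt_atTop 0] with y hy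
  have hy₀ : (y : ℂ) ≠ 0 := ofReal_ne_zero.2 hy.ne'
  have e₁ : f z - conj (f (I * y)) = (f z * (I * y)⁻¹ + conj (g y)) * (I * y) := by
    simp only [g, map_div₀, map_mul, conj_I, conj_ofReal]
    field_simp
    ring
  have e₂ : z - conj (I * y) = (z * (I * y)⁻¹ + 1) * (I * y) := by
    simp only [map_mul, conj_I, conj_ofReal]
    field_simp
    ring
  have e₃ : (f (I * y)).im = (g y).re * y := by
    rw [show f (I * y) = g y * (I * y) by simp only [g]; field_simp]
    simp
  have hnormSq : normSq (I * y) = y ^ 2 := by simp [normSq_mul, sq]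
  have h := im_mul_im_mul_normSq_sub_conj_le hf hpos hz (w := I * y) (by simpa using hy)
  rw [e₁, e₂, e₃, normSq_mul (f z * _ + _), normSq_mul (z * _ + 1), hnormSq,
    show (I * (y : ℂ)).im = y by simp] at h
  refine le_of_mul_le_mul_right (a := y ^ 3) ?_ (by positivity)
  linear_combination h

def schurTransform (s₀ s₁ : ℂ) (n : ℂ → ℂ) (z : ℂ) : ℂ := -s₀ / n z - z + s₁ / s₀

theorem tendsto_sq_mul_iff_tendsto_schurTransform {l : Filter ℂ} (hl : l ≤ cobounded ℂ)
    {n : ℂ → ℂ} (hn : ∀ᶠ w in l, n w ≠ 0) {s₀ s₁ : ℂ} (hs₀ : s₀ ≠ 0) :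
    Tendsto (fun w => w ^ 2 * (n w + s₀ / w + s₁ / w ^ 2)) l (𝓝 0) ↔
      Tendsto (schurTransform s₀ s₁ n) l (𝓝 0) := by
  set E := fun w => w ^ 2 * (n w + s₀ / w + s₁ / w ^ 2)
  set c := s₁ / s₀
  have hinv : Tendsto (·⁻¹) l (𝓝 (0 : ℂ)) := tendsto_inv₀_cobounded.mono_left hl
  have hev : ∀ᶠ w in l, w ≠ 0 ∧ n w ≠ 0 := ((eventually_ne_cobounded 0).filter_mono hl).and hn
  constructor
  · intro hE
    have key : Tendsto (fun w => (E w * (1 - c * w⁻¹) + s₁ * c * w⁻¹) /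
        (s₀ + s₁ * w⁻¹ - E w * w⁻¹)) l (𝓝 0) := by
      simpa [Pi.div_def] using
        ((hE.mul ((hinv.const_mul c).const_sub 1)).add (hinv.const_mul (s₁ * c))).div
          (((hinv.const_mul s₁).const_add s₀).sub (hE.mul hinv)) (by simpa using hs₀)
    refine key.congr' (hev.mono fun w ⟨hw, hnw⟩ => ?_)
    have hden : s₀ + s₁ * w⁻¹ - E w * w⁻¹ = -(w * n w) := by
      simp only [E]; field_simp; ring
    rw [hden, div_eq_iff (neg_ne_zero.2 (mul_ne_zero hw hnw))]
    simp only [schurTransform, E, c]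
    field_simp
    ring
  · intro hS
    have key : Tendsto (fun w => ((s₀ + s₁ * w⁻¹) * schurTransform s₀ s₁ n w - s₁ * c * w⁻¹)
        / (1 + (schurTransform s₀ s₁ n w - c) * w⁻¹)) l (𝓝 0) := by
      simpa [Pi.div_def] using
        ((((hinv.const_mul s₁).const_add s₀).mul hS).sub (hinv.const_mul (s₁ * c))).div
          (((hS.sub_const c).mul hinv).const_add 1) (by simp)
    refine key.congr' (hev.mono fun w ⟨hw, hnw⟩ => ?_)
    have hden : 1 + (schurTransform s₀ s₁ n w - c) * w⁻¹ = -s₀ / (w * n w) := by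
      simp only [schurTransform, c]; field_simp; ring
    rw [hden, div_eq_iff (div_ne_zero (neg_ne_zero.2 hs₀) (mul_ne_zero hw hnw))]
    simp only [schurTransform, E, c]
    field_simp
    ring

lemma im_neg_ofReal_div (s : ℝ) (v : ℂ) : (-(s : ℂ) / v).im = s * v.im / normSq v := by
  simp [div_im]
  ring

lemma im_schurTransform (s₀ s₁ : ℝ) (n : ℂ → ℂ) (z : ℂ) :
    (schurTransform s₀ s₁ n z).im = s₀ * (n z).im / normSq (n z) - z.im := by
  rw [schurTransform, add_im, sub_im, im_neg_ofReal_div, ← ofReal_div, ofReal_im, add_zero]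

theorem isNevanlinna_schurTransform {n : ℂ → ℂ} (hn : IsNevanlinna n)
    (hne : ∀ z : ℂ, z.im ≠ 0 → n z ≠ 0) {s₀ : ℝ} (hs₀ : 0 < s₀) (s₁ : ℝ) {a : ℂ}
    (hlim : Tendsto (fun y : ℝ => schurTransform s₀ s₁ n (I * y)) atTop (𝓝 a)) :
    IsNevanlinna (schurTransform s₀ s₁ n) := by
  obtain ⟨hanal, hsym, him⟩ := hn
  refine ⟨((analyticOn_const.div hanal hne).sub analyticOn_id).add analyticOn_const,
    fun z hz => ?_, fun z hz => ?_⟩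
  · simp only [schurTransform, hsym z hz, map_add, map_sub, map_div₀, map_neg, conj_ofReal]
  set m := fun w => -(s₀ : ℂ) / n w
  have hm : DifferentiableOn ℂ m {w | 0 < w.im} :=
    (analyticOn_const.div hanal hne).differentiableOn.mono fun w hw => ne_of_gt hw
  have hm_im : ∀ w, 0 < w.im → 0 ≤ (m w).im := fun w hw => by
    have := him w hw
    simp only [m, im_neg_ofReal_div]
    exact div_nonneg (mul_nonneg hs₀.le this) (normSq_nonneg _)
  have hm_lim : Tendsto (fun y : ℝ => m (I * y) / (I * y)) atTop (𝓝 1) := by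
    have hinv := tendsto_inv_I_mul_atTop
    have h := ((hlim.sub_const (s₁ / s₀ : ℂ)).mul hinv).const_add 1
    rw [mul_zero, add_zero] at h
    refine h.congr' ?_
    filter_upwards [eventually_ne_atTop 0] with y hy
    have hy₀ : (y : ℂ) ≠ 0 := ofReal_ne_zero.2 hy
    simp only [m, schurTransform]
    field_simp
    ring
  have := im_le_im_of_tendsto_div_I_mul hm hm_im hm_lim hz
  rw [im_schurTransform]
  simp only [m, im_neg_ofReal_div] at this
  linarith

theorem isNevanlinna_of_isNevanlinna_schurTransform {n : ℂ → ℂ}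
    (hanal : AnalyticOn ℂ n {z : ℂ | z.im ≠ 0})
    (hsym : ∀ z : ℂ, z.im ≠ 0 → n (conj z) = conj (n z))
    {s₀ : ℝ} (hs₀ : 0 < s₀) {s₁ : ℝ} (h : IsNevanlinna (schurTransform s₀ s₁ n)) :
    IsNevanlinna n := by
  refine ⟨hanal, hsym, fun z hz => ?_⟩
  have := h.2.2 z hz
  rw [im_schurTransform] at this
  by_contra! hneg
  have : s₀ * (n z).im / normSq (n z) ≤ 0 :=
    div_nonpos_of_nonpos_of_nonneg (mul_nonpos_of_nonneg_of_nonpos hs₀.le hneg.le)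
      (normSq_nonneg _)
  linarith

/-- for the Schur transform `n̂(z) = -s₀/n(z) - z + s₁/s₀`, the function `n`
is a Nevanlinna function satisfying condition (3₀) (i.e.
`(iy)²·(n(iy) + s₀/(iy) + s₁/(iy)²) → 0` as `y → ±∞`) if and only if `n̂` is a Nevanlinna
function with `n̂(iy) → 0` as `y → ±∞`. -/
theorem schur_transform_cond_three_zero (s₀ s₁ : ℝ) (hs₀ : 0 < s₀) (n : ℂ → ℂ)
    (hanal : AnalyticOn ℂ n {z : ℂ | z.im ≠ 0})
    (hsym : ∀ z : ℂ, z.im ≠ 0 → n ((starRingEnd ℂ) z) = (starRingEnd ℂ) (n z))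
    (hne : ∀ z : ℂ, z.im ≠ 0 → n z ≠ 0)
    (nh : ℂ → ℂ) (hnh : ∀ z : ℂ, nh z = -(s₀ : ℂ) / n z - z + (s₁ : ℂ) / (s₀ : ℂ)) :
    (IsNevanlinna n ∧
        Tendsto
          (fun y : ℝ => (Complex.I * y) ^ 2 *
            (n (Complex.I * y) + (s₀ : ℂ) / (Complex.I * y) +
              (s₁ : ℂ) / (Complex.I * y) ^ 2))
          (atTop ⊔ atBot) (nhds 0)) ↔
      (IsNevanlinna nh ∧
        Tendsto (fun y : ℝ => nh (Complex.I * y)) (atTop ⊔ atBot) (nhds 0)) := by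
  obtain rfl : nh = schurTransform s₀ s₁ n := funext hnh
  have hn : ∀ᶠ y : ℝ in atTop ⊔ atBot, n (I * y) ≠ 0 :=
    eventually_sup.2 ⟨(eventually_ne_atTop 0).mono fun y hy => hne _ (by simpa using hy),
      (eventually_ne_atBot 0).mono fun y hy => hne _ (by simpa using hy)⟩
  have hlim :
      Tendsto (fun y : ℝ => (I * y) ^ 2 * (n (I * y) + s₀ / (I * y) + s₁ / (I * y) ^ 2))
        (atTop ⊔ atBot) (𝓝 0) ↔
      Tendsto (fun y : ℝ => schurTransform s₀ s₁ n (I * y)) (atTop ⊔ atBot) (𝓝 0) :=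
    tendsto_sq_mul_iff_tendsto_schurTransform tendsto_I_mul_cobounded hn
      (ofReal_ne_zero.2 hs₀.ne')
  refine ⟨fun ⟨hN, hE⟩ => ?_, fun ⟨hN, hS⟩ => ⟨?_, hlim.2 hS⟩⟩
  · have hS := hlim.1 hE
    exact ⟨isNevanlinna_schurTransform hN hne hs₀ s₁ (hS.mono_left le_sup_left), hS⟩
  · exact isNevanlinna_of_isNevanlinna_schurTransform hanal hsym hs₀ hN
end
end

section
/- Let s₀ > 0, let γ ∈ ℂ with Im γ > 0, and let f be analytic on the open upper half plane ℂ⁺ with Im f(z) ≥ 0 on ℂ⁺ and lim_{y→+∞} f(iy) = 0. Define n(z) = −s₀/(z + γ + f(z)) for z ∈ ℂ⁺ and n(z) = conj(n(conj z)) for z ∈ ℂ⁻ (the denominator is nonzero on ℂ⁺). Then n is a Nevanlinna function, lim_{y→+∞} (iy)²·(n(iy) + s₀/(iy)) = γ·s₀ and lim_{y→−∞} (iy)²·(n(iy) + s₀/(iy)) = conj(γ)·s₀; consequently y ↦ (iy)²·(n(iy) + s₀/(iy)) is bounded for |y| large (condition (2₀) holds), but there exists no real number s₁ with lim_{y→±∞}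 (iy)²·(n(iy) + s₀/(iy) + s₁/(iy)²) = 0 (condition (3₀) fails). -/
/-!
On the upper half plane `z + γ + f z` has positive imaginary part, so `n = -s₀ / (z + γ + f z)` is
holomorphic there with `Im n ≥ 0`, and the reflection `n z = conj (n (conj z))` makes it Nevanlinna.
Along the imaginary axis, with `g = γ + f (iy) → γ`,
`(iy)² (n(iy) + s₀/(iy)) = s₀ g / (1 + g/(iy)) → γ s₀`; on the negative axis the reflection
replaces `γ` by `conj γ`. A real `s₁` as in (3₀) would force both limits to equal `-s₁`, which is
impossible since `γ s₀ ≠ conj γ s₀` when `Im γ > 0`.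
-/

open Filter Complex

noncomputable section

open ComplexConjugate Topology Bornology

theorem isNevanlinna_of_conj_reflection {n : ℂ → ℂ}
    (hn : DifferentiableOn ℂ n {z | 0 < z.im}) (hn_im : ∀ z : ℂ, 0 < z.im → 0 ≤ (n z).im)
    (hdown : ∀ z : ℂ, z.im < 0 → n z = conj (n (conj z))) :
    IsNevanlinna n := by
  have hupper : IsOpen {z : ℂ | 0 < z.im} := isOpen_lt continuous_const continuous_im
  have hlower : IsOpen {z : ℂ | z.im < 0} := isOpen_lt continuous_im continuous_const
  refine ⟨DifferentiableOn.analyticOn ?_ (isOpen_ne_fun continuous_im continuous_const),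
    fun z hz => ?_, hn_im⟩
  · intro z hz
    rcases (hz : z.im ≠ 0).lt_or_gt with h | h
    · have hreflect : n =ᶠ[𝓝 z] conj ∘ n ∘ conj := eventually_of_mem (hlower.mem_nhds h) hdown
      refine (hreflect.differentiableAt_iff.2 ?_).differentiableWithinAt
      rw [differentiableAt_conj_conj_iff]
      exact hn.differentiableAt (hupper.mem_nhds (by simpa using h))
    · exact (hn.differentiableAt (hupper.mem_nhds h)).differentiableWithinAt
  · rcases hz.lt_or_gt with h | h
    · rw [hdown z h, conj_conj]
    · rw [hdown (conj z) (by simpa using h), conj_conj]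

theorem im_neg_ofReal_div_nonneg {s : ℝ} (hs : 0 ≤ s) {w : ℂ} (hw : 0 ≤ w.im) :
    0 ≤ (-(s : ℂ) / w).im := by
  simp only [div_im, neg_im, ofReal_im, ofReal_re, zero_mul, zero_div, zero_sub,
    neg_div, neg_neg]
  exact div_nonneg (mul_nonneg hs hw) (normSq_nonneg w)

theorem tendsto_sq_mul_neg_div_add_div {α : Type*} {l : Filter α} {z g : α → ℂ} {c : ℂ}
    (s : ℂ) (hz : Tendsto z l (cobounded ℂ)) (hg : Tendsto g l (𝓝 c)) :
    Tendsto (fun a => z a ^ 2 * (-s / (z a + g a) + s / z a)) l (𝓝 (c * s)) := by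
  have hratio : Tendsto (fun a => 1 + g a / z a) l (𝓝 1) := by
    simpa [div_eq_mul_inv] using tendsto_const_nhds.add (hg.mul (tendsto_inv₀_cobounded.comp hz))
  have hlim : Tendsto (fun a => s * g a / (1 + g a / z a)) l (𝓝 (c * s)) := by
    have := ((tendsto_const_nhds (x := s)).mul hg).div hratio one_ne_zero
    rwa [div_one, mul_comm s c] at this
  refine hlim.congr' ?_
  filter_upwards [hz.eventually_ne_cobounded 0, hratio.eventually_ne one_ne_zero]
    with a hz₀ hratio₀
  have hsum : z a + g a ≠ 0 := by
    have hsplit : 1 + g a / z a = (z a + g a) / z a := by field_simp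
    exact fun h => hratio₀ (by rw [hsplit, h, zero_div])
  field_simp
  ring

theorem tendsto_I_mul_ofReal_cobounded :
    Tendsto (fun y : ℝ => I * y) (cobounded ℝ) (cobounded ℂ) := by
  rw [← tendsto_norm_atTop_iff_cobounded]
  simpa only [norm_mul, norm_I, one_mul, norm_real] using tendsto_norm_cobounded_atTop (E := ℝ)

def axisRemainder (n : ℂ → ℂ) (s₀ : ℝ) (y : ℝ) : ℂ :=
  (I * y) ^ 2 * (n (I * y) + s₀ / (I * y))

theorem tendsto_axisRemainder_atTop {s₀ : ℝ} {γ : ℂ} {f n : ℂ → ℂ}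
    (hflim : Tendsto (fun y : ℝ => f (I * y)) atTop (𝓝 0))
    (hup : ∀ z : ℂ, 0 < z.im → n z = -(s₀ : ℂ) / (z + γ + f z)) :
    Tendsto (axisRemainder n s₀) atTop (𝓝 (γ * s₀)) := by
  have := tendsto_sq_mul_neg_div_add_div (s₀ : ℂ)
    (tendsto_I_mul_ofReal_cobounded.mono_left IsOrderBornology.atTop_le_cobounded)
    ((tendsto_const_nhds (x := γ)).add hflim)
  rw [add_zero] at this
  refine this.congr' ?_
  filter_upwards [eventually_gt_atTop 0] with y hy
  rw [axisRemainder, hup (I * y) (by simpa using hy), add_assoc]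

theorem tendsto_axisRemainder_atBot {s₀ : ℝ} {γ : ℂ} {f n : ℂ → ℂ}
    (hflim : Tendsto (fun y : ℝ => f (I * y)) atTop (𝓝 0))
    (hup : ∀ z : ℂ, 0 < z.im → n z = -(s₀ : ℂ) / (z + γ + f z))
    (hdown : ∀ z : ℂ, z.im < 0 → n z = conj (n (conj z))) :
    Tendsto (axisRemainder n s₀) atBot (𝓝 (conj γ * s₀)) := by
  have hf : Tendsto (fun y : ℝ => conj (f (conj (I * y)))) atBot (𝓝 0) := by
    have := (continuous_conj.tendsto 0).comp (hflim.comp tendsto_neg_atBot_atTop)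
    simpa [Function.comp_def] using this
  have := tendsto_sq_mul_neg_div_add_div (s₀ : ℂ)
    (tendsto_I_mul_ofReal_cobounded.mono_left IsOrderBornology.atBot_le_cobounded)
    ((tendsto_const_nhds (x := conj γ)).add hf)
  rw [add_zero] at this
  refine this.congr' ?_
  filter_upwards [eventually_lt_atBot 0] with y hy
  have hy' : 0 < (conj (I * y)).im := by simpa using hy
  rw [axisRemainder, hdown (I * y) (by simpa using hy), hup _ hy', map_div₀, map_neg, conj_ofReal,
    map_add, map_add, conj_conj, add_assoc]

theorem not_tendsto_axisRemainder_add_of_ne {n : ℂ → ℂ} {s₀ : ℝ} {a b : ℂ}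
    (ha : Tendsto (axisRemainder n s₀) atTop (𝓝 a))
    (hb : Tendsto (axisRemainder n s₀) atBot (𝓝 b)) (hab : a ≠ b) (s₁ : ℝ) :
    ¬ Tendsto (fun y : ℝ => (I * y) ^ 2 * (n (I * y) + s₀ / (I * y) + s₁ / (I * y) ^ 2))
      (atTop ⊔ atBot) (𝓝 0) := by
  intro h
  have hlim : Tendsto (axisRemainder n s₀) (atTop ⊔ atBot) (𝓝 (0 - s₁)) := by
    refine (h.sub_const (s₁ : ℂ)).congr' ?_
    filter_upwards [eventually_sup.2 ⟨eventually_ne_atTop 0, eventually_ne_atBot 0⟩] with y hy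
    have hIy : I * y ≠ 0 := by simpa using hy
    rw [axisRemainder, mul_add, mul_div_cancel₀ _ (pow_ne_zero 2 hIy), add_sub_cancel_right]
  exact hab ((tendsto_nhds_unique ha (hlim.mono_left le_sup_left)).trans
    (tendsto_nhds_unique hb (hlim.mono_left le_sup_right)).symm)

/-- for `n(z) = -s₀/(z + γ + f(z))` on `ℂ⁺` (extended symmetrically to `ℂ⁻`),
with `Im γ > 0` and `f` a Nevanlinna-type function on `ℂ⁺` tending to `0` along the positive
imaginary axis, `n` is a Nevanlinna function satisfying condition (2₀) but not (3₀): the two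
limits of `(iy)²·(n(iy) + s₀/(iy))` as `y → +∞` and `y → -∞` are `γs₀` and `conj(γ)s₀`. -/
theorem cond_two_zero_not_three_zero_example (s₀ : ℝ) (hs₀ : 0 < s₀) (γ : ℂ)
    (hγ : 0 < γ.im) (f : ℂ → ℂ)
    (hf : AnalyticOn ℂ f {z : ℂ | 0 < z.im})
    (hfim : ∀ z : ℂ, 0 < z.im → 0 ≤ (f z).im)
    (hflim : Tendsto (fun y : ℝ => f (Complex.I * y)) atTop (nhds 0))
    (n : ℂ → ℂ)
    (hup : ∀ z : ℂ, 0 < z.im → n z = -(s₀ : ℂ) / (z + γ + f z))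
    (hdown : ∀ z : ℂ, z.im < 0 → n z = (starRingEnd ℂ) (n ((starRingEnd ℂ) z))) :
    IsNevanlinna n ∧
    Tendsto
        (fun y : ℝ => (Complex.I * y) ^ 2 *
          (n (Complex.I * y) + (s₀ : ℂ) / (Complex.I * y)))
        atTop (nhds (γ * (s₀ : ℂ))) ∧
    Tendsto
        (fun y : ℝ => (Complex.I * y) ^ 2 *
          (n (Complex.I * y) + (s₀ : ℂ) / (Complex.I * y)))
        atBot (nhds ((starRingEnd ℂ) γ * (s₀ : ℂ))) ∧
    IsBoundedUnder (· ≤ ·) (atTop ⊔ atBot)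
        (fun y : ℝ =>
          ‖(Complex.I * y) ^ 2 * (n (Complex.I * y) + (s₀ : ℂ) / (Complex.I * y))‖) ∧
    ¬ ∃ s₁ : ℝ,
        Tendsto
          (fun y : ℝ => (Complex.I * y) ^ 2 *
            (n (Complex.I * y) + (s₀ : ℂ) / (Complex.I * y) +
              (s₁ : ℂ) / (Complex.I * y) ^ 2))
          (atTop ⊔ atBot) (nhds 0) := by
  have hden : ∀ z : ℂ, 0 < z.im → 0 < (z + γ + f z).im := fun z hz => by
    simp only [add_im]
    linarith [hfim z hz]
  have hdiff : DifferentiableOn ℂ n {z | 0 < z.im} :=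
    ((differentiableOn_const _).div ((differentiableOn_id.add_const γ).add hf.differentiableOn)
      fun z hz => ne_of_apply_ne im (hden z hz).ne').congr hup
  have hTop := tendsto_axisRemainder_atTop hflim hup
  have hBot := tendsto_axisRemainder_atBot hflim hup hdown
  have hlimits_ne : γ * s₀ ≠ conj γ * s₀ :=
    (mul_left_injective₀ (ofReal_ne_zero.2 hs₀.ne')).ne fun h => hγ.ne' (conj_eq_iff_im.1 h.symm)
  refine ⟨isNevanlinna_of_conj_reflection hdiff (fun z hz => ?_) hdown, hTop, hBot, ?_,
    fun ⟨s₁, hs₁⟩ => not_tendsto_axisRemainder_add_of_ne hTop hBot hlimits_ne s₁ hs₁⟩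
  · rw [hup z hz]
    exact im_neg_ofReal_div_nonneg hs₀.le (hden z hz).le
  · rw [IsBoundedUnder, map_sup]
    exact isBounded_sup hTop.norm.isBoundedUnder_le hBot.norm.isBoundedUnder_le
end
end

section
/- Let σ be a finite positive Borel measure on ℝ, let n(z) = ∫_ℝ dσ(t)/(t − z), set s₀ = σ(ℝ), and suppose that for some real number s₁ the function y ↦ (iy)³·(n(iy) + s₀/(iy) + s₁/(iy)²) is bounded as y → +∞. Then ∫_ℝ t² dσ(t) < ∞, s₁ = ∫_ℝ t dσ(t), and, with s₂ := ∫_ℝ t² dσ(t), one has lim_{y→±∞} (iy)³·(n(iy) + s₀/(iy) + s₁/(iy)² + s₂/(iy)³) = 0; that is, n(iy) = −s₀/(iy) − s₁/(iy)² − s₂/(iy)³ + o(|y|^{−3}) as y → ±∞. -/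
/-!
Write `z = iy` and `mₖ = ∫ tᵏ dσ`. Since `z³ (1/(t - z) + 1/z) = z² t/(t - z)`, the real part of
`z³ (n(z) + s₀/z + s₁/z²)` is `-∫ y²t²/(t² + y²) dσ`; the assumed bound and Fatou's lemma give
`m₂ < ∞`. Then `z³ (n(z) + s₀/z + m₁/z² + m₂/z³) = ∫ t³/(t - z) dσ`, which tends to `0` by
dominated convergence, as `|t³/(t - iy)| ≤ t²`. The assumed bounded quantity differs from it by
`(s₁ - m₁) iy - m₂`, which is bounded only if `s₁ = m₁`.
-/

open Filter Complex MeasureTheory Topology Asymptotics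

lemma abs_le_norm_ofReal_sub_I_mul (t y : ℝ) : |t| ≤ ‖(t : ℂ) - I * y‖ := by
  simpa using abs_re_le_norm ((t : ℂ) - I * y)

lemma abs_im_le_norm_ofReal_sub (t : ℝ) (z : ℂ) : |z.im| ≤ ‖(t : ℂ) - z‖ := by
  simpa using abs_im_le_norm ((t : ℂ) - z)

lemma ofReal_sub_ne_zero {z : ℂ} (hz : z.im ≠ 0) (t : ℝ) : (t : ℂ) - z ≠ 0 := fun h =>
  hz (by simpa using congrArg im h)

lemma norm_cube_mul_inv_ofReal_sub_I_mul_le (t y : ℝ) :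
    ‖(t : ℂ) ^ 3 * ((t : ℂ) - I * y)⁻¹‖ ≤ t ^ 2 := by
  rw [norm_mul, norm_inv, ← div_eq_mul_inv, norm_pow, norm_real, Real.norm_eq_abs]
  refine div_le_of_le_mul₀ (norm_nonneg _) (sq_nonneg t) ?_
  calc |t| ^ 3 = t ^ 2 * |t| := by rw [pow_succ, sq_abs]
    _ ≤ t ^ 2 * ‖(t : ℂ) - I * y‖ := by gcongr; exact abs_le_norm_ofReal_sub_I_mul t y

lemma re_I_mul_cube_mul_inv_add_sq (t : ℝ) {y : ℝ} (hy : y ≠ 0) :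
    ((I * y) ^ 3 * ((t : ℂ) - I * y)⁻¹ + (I * y) ^ 2).re =
      -(y ^ 2 * t ^ 2 / (t ^ 2 + y ^ 2)) := by
  have h : t ^ 2 + y ^ 2 ≠ 0 := by positivity
  rw [inv_def]
  simp [normSq_apply, pow_succ]
  field_simp
  ring

lemma integrable_sq_of_integral_mul_sq_div_le {μ : Measure ℝ} [IsFiniteMeasure μ] {C : ℝ}
    (hC : ∀ᶠ y in atTop, ∫ t, y ^ 2 * t ^ 2 / (t ^ 2 + y ^ 2) ∂μ ≤ C) :
    Integrable (fun t : ℝ => t ^ 2) μ := by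
  set G : ℕ → ℝ → ℝ := fun k t => (k : ℝ) ^ 2 * t ^ 2 / (t ^ 2 + (k : ℝ) ^ 2)
  have hG_nonneg : ∀ k t, 0 ≤ G k t := fun k t => by positivity
  have hG_int : ∀ k, Integrable (G k) μ := fun k =>
    Integrable.mono' (integrable_const ((k : ℝ) ^ 2))
      (by fun_prop : Measurable (G k)).aestronglyMeasurable <| ae_of_all _ fun t => by
        rw [Real.norm_of_nonneg (hG_nonneg k t)]
        exact div_le_of_le_mul₀ (by positivity) (by positivity) (by nlinarith [sq_nonneg (k : ℝ)])
  have hG_lim : ∀ t, Tendsto (fun k => G k t) atTop (𝓝 (t ^ 2)) := by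
    intro t
    have hden : Tendsto (fun k : ℕ => t ^ 2 + (k : ℝ) ^ 2) atTop atTop :=
      tendsto_atTop_add_const_left _ _ <|
        (tendsto_pow_atTop two_ne_zero).comp tendsto_natCast_atTop_atTop
    have hlim := (tendsto_const_nhds (x := t ^ 2)).sub
      ((tendsto_const_nhds (x := t ^ 4)).div_atTop hden)
    rw [sub_zero] at hlim
    refine hlim.congr' ?_
    filter_upwards [eventually_ge_atTop 1] with k hk
    have : t ^ 2 + (k : ℝ) ^ 2 ≠ 0 := by positivity
    simp only [G]
    field_simp
    ring
  refine integrable_of_tendsto (ae_of_all _ hG_lim) (fun k => (hG_int k).aestronglyMeasurable)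
    (ne_top_of_le_ne_top (ENNReal.ofReal_ne_top (r := C)) (liminf_le_of_frequently_le' ?_))
  refine ((tendsto_natCast_atTop_atTop.eventually hC).mono fun k hk => ?_).frequently
  rw [← ofReal_integral_norm_eq_lintegral_enorm (hG_int k)]
  refine ENNReal.ofReal_le_ofReal (le_trans (le_of_eq ?_) hk)
  exact integral_congr_ae (ae_of_all _ fun t => Real.norm_of_nonneg (hG_nonneg k t))

lemma eq_zero_of_isBigO_mul_I_mul {c : ℂ}
    (h : (fun y : ℝ => c * (I * y)) =O[atTop] (fun _ => (1 : ℝ))) : c = 0 := by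
  by_contra hc
  have hunb : Tendsto (fun y : ℝ => ‖c * (I * y)‖) atTop atTop := by
    simpa [norm_mul] using tendsto_abs_atTop_atTop.const_mul_atTop (norm_pos_iff.2 hc)
  exact not_isBoundedUnder_of_tendsto_atTop hunb ((isBigO_one_iff ℝ).1 h)

lemma eq_of_isBoundedUnder_cube_mul_of_tendsto {a : ℝ → ℂ} {s m c : ℝ}
    (hs : IsBoundedUnder (· ≤ ·) atTop fun y : ℝ => ‖(I * y) ^ 3 * (a y + s / (I * y) ^ 2)‖)
    (hm : Tendsto (fun y : ℝ => (I * y) ^ 3 * (a y + m / (I * y) ^ 2 + c / (I * y) ^ 3))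
      atTop (𝓝 0)) :
    s = m := by
  have hlin : (fun y : ℝ => ((s - m : ℝ) : ℂ) * (I * y)) =O[atTop] (fun _ => (1 : ℝ)) := by
    refine ((((isBigO_one_iff ℝ).2 hs).sub (hm.isBigO_one ℝ)).add
      (isBigO_const_one ℝ (c : ℂ) atTop)).congr' ?_ EventuallyEq.rfl
    filter_upwards [eventually_ne_atTop 0] with y hy
    have hz : (I * y : ℂ) ≠ 0 := by simpa using hy
    push_cast
    generalize (I * y : ℂ) = z at hz ⊢
    field_simp
    ring
  exact sub_eq_zero.1 (ofReal_eq_zero.1 (eq_zero_of_isBigO_mul_I_mul hlin))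

section CauchyTransform

variable (σ : Measure ℝ)

noncomputable def cauchyTransform (z : ℂ) : ℂ := ∫ t : ℝ, ((t : ℂ) - z)⁻¹ ∂σ

lemma tendsto_integral_cube_mul_inv_ofReal_sub_I_mul (h2 : Integrable (fun t : ℝ => t ^ 2) σ) :
    Tendsto (fun y : ℝ => ∫ t, (t : ℂ) ^ 3 * ((t : ℂ) - I * y)⁻¹ ∂σ) (atTop ⊔ atBot) (𝓝 0) := by
  have habs : Tendsto (fun y : ℝ => |y|) (atTop ⊔ atBot) atTop :=
    tendsto_abs_atTop_atTop.sup tendsto_abs_atBot_atTop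
  have hpt : ∀ t : ℝ, Tendsto (fun y : ℝ => (t : ℂ) ^ 3 * ((t : ℂ) - I * y)⁻¹)
      (atTop ⊔ atBot) (𝓝 0) := by
    intro t
    have hnorm : Tendsto (fun y : ℝ => ‖(t : ℂ) - I * y‖) (atTop ⊔ atBot) atTop :=
      tendsto_atTop_mono (fun y => by simpa using abs_im_le_norm_ofReal_sub t (I * y)) habs
    simpa using (tendsto_inv₀_cobounded.comp
      (tendsto_norm_atTop_iff_cobounded.mp hnorm)).const_mul ((t : ℂ) ^ 3)
  simpa using tendsto_integral_filter_of_dominated_convergence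
    (F := fun (y : ℝ) (t : ℝ) => (t : ℂ) ^ 3 * ((t : ℂ) - I * y)⁻¹) (fun t => t ^ 2)
    (Eventually.of_forall fun y => (by fun_prop :
      Measurable fun t : ℝ => (t : ℂ) ^ 3 * ((t : ℂ) - I * y)⁻¹).aestronglyMeasurable)
    (Eventually.of_forall fun y => ae_of_all _ fun t => norm_cube_mul_inv_ofReal_sub_I_mul_le t y)
    h2 (ae_of_all _ hpt)

variable [IsFiniteMeasure σ]

lemma integrable_inv_ofReal_sub {z : ℂ} (hz : z.im ≠ 0) :
    Integrable (fun t : ℝ => ((t : ℂ) - z)⁻¹) σ := by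
  refine Integrable.mono' (integrable_const |z.im|⁻¹)
    (by fun_prop : Measurable fun t : ℝ => ((t : ℂ) - z)⁻¹).aestronglyMeasurable
    (ae_of_all _ fun t => ?_)
  rw [norm_inv]
  exact inv_anti₀ (abs_pos.2 hz) (abs_im_le_norm_ofReal_sub t z)

lemma cube_mul_cauchyTransform_add_div {z : ℂ} (hz : z.im ≠ 0) :
    z ^ 3 * (cauchyTransform σ z + σ.real Set.univ / z) =
      ∫ t : ℝ, (z ^ 3 * ((t : ℂ) - z)⁻¹ + z ^ 2) ∂σ := by
  have hz0 : z ≠ 0 := fun h => hz (by simp [h])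
  rw [integral_add ((integrable_inv_ofReal_sub σ hz).const_mul _) (integrable_const _),
    integral_const_mul, integral_const, cauchyTransform, real_smul]
  field_simp

lemma cube_mul_cauchyTransform_add_moments {z : ℂ} (hz : z.im ≠ 0)
    (h1 : Integrable (fun t : ℝ => t) σ) (h2 : Integrable (fun t : ℝ => t ^ 2) σ) :
    z ^ 3 * (cauchyTransform σ z + σ.real Set.univ / z + (∫ t, t ∂σ : ℝ) / z ^ 2 +
        (∫ t, t ^ 2 ∂σ : ℝ) / z ^ 3) =
      ∫ t : ℝ, (t : ℂ) ^ 3 * ((t : ℂ) - z)⁻¹ ∂σ := by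
  have hz0 : z ≠ 0 := fun h => hz (by simp [h])
  have hsplit : ∀ t : ℝ, (t : ℂ) ^ 3 * ((t : ℂ) - z)⁻¹ =
      (z ^ 3 * ((t : ℂ) - z)⁻¹ + z ^ 2) + ((t : ℂ) * z + (t : ℂ) ^ 2) := fun t => by
    have := ofReal_sub_ne_zero hz t
    field_simp
    ring
  have h1' : Integrable (fun t : ℝ => (t : ℂ) * z) σ := h1.ofReal.mul_const z
  have h2' : Integrable (fun t : ℝ => (t : ℂ) ^ 2) σ := by simpa using h2.ofReal (𝕜 := ℂ)
  have hinv : Integrable (fun t : ℝ => z ^ 3 * ((t : ℂ) - z)⁻¹ + z ^ 2) σ :=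
    ((integrable_inv_ofReal_sub σ hz).const_mul _).add (integrable_const _)
  have hmoments : ∫ t : ℝ, ((t : ℂ) * z + (t : ℂ) ^ 2) ∂σ =
      (∫ t, t ∂σ : ℝ) * z + (∫ t, t ^ 2 ∂σ : ℝ) := by
    rw [integral_add h1' h2', integral_mul_const, ← integral_complex_ofReal,
      ← integral_complex_ofReal]
    simp only [ofReal_pow]
  have hmom_int : Integrable (fun t : ℝ => (t : ℂ) * z + (t : ℂ) ^ 2) σ := h1'.add h2'
  rw [integral_congr_ae (ae_of_all _ hsplit), integral_add hinv hmom_int,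
    ← cube_mul_cauchyTransform_add_div σ hz, hmoments]
  field_simp
  ring

lemma integral_mul_sq_div_eq_neg_re {y : ℝ} (hy : y ≠ 0) (s : ℝ) :
    ∫ t, y ^ 2 * t ^ 2 / (t ^ 2 + y ^ 2) ∂σ =
      -((I * y) ^ 3 * (cauchyTransform σ (I * y) + σ.real Set.univ / (I * y) +
        s / (I * y) ^ 2)).re := by
  have hz : (I * y).im ≠ 0 := by simpa using hy
  have hsplit : (I * y) ^ 3 * (cauchyTransform σ (I * y) + σ.real Set.univ / (I * y) +
      s / (I * y) ^ 2) =
      (I * y) ^ 3 * (cauchyTransform σ (I * y) + σ.real Set.univ / (I * y)) + s * (I * y) := by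
    have : (I * y : ℂ) ≠ 0 := by simpa using hy
    generalize (I * y : ℂ) = z at this ⊢
    field_simp
  have hint : Integrable (fun t : ℝ => (I * y) ^ 3 * ((t : ℂ) - I * y)⁻¹ + (I * y) ^ 2) σ :=
    ((integrable_inv_ofReal_sub σ hz).const_mul _).add (integrable_const _)
  rw [hsplit, cube_mul_cauchyTransform_add_div σ hz, add_re, ← RCLike.re_to_complex,
    ← integral_re hint]
  simp only [RCLike.re_to_complex, re_I_mul_cube_mul_inv_add_sq _ hy, integral_neg]
  simp

end CauchyTransform

/-- if the Cauchy transform `n` of a finite positive measure `σ` satisfies,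
for some real `s₁`, that `(iy)³·(n(iy) + s₀/(iy) + s₁/(iy)²)` is bounded as `y → +∞`,
then `∫ t² dσ < ∞`, `s₁ = ∫ t dσ`, and with `s₂ = ∫ t² dσ`,
`(iy)³·(n(iy) + s₀/(iy) + s₁/(iy)² + s₂/(iy)³) → 0` as `y → ±∞`. -/
theorem cauchy_transform_big_O_implies_little_o
    (σ : Measure ℝ) [IsFiniteMeasure σ]
    (n : ℂ → ℂ) (hn : ∀ z : ℂ, z.im ≠ 0 → n z = ∫ t : ℝ, ((t : ℂ) - z)⁻¹ ∂σ)
    (s₀ : ℝ) (hs₀ : s₀ = (σ Set.univ).toReal)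
    (s₁ : ℝ)
    (hbd : IsBoundedUnder (· ≤ ·) atTop
      (fun y : ℝ =>
        ‖(Complex.I * y) ^ 3 *
          (n (Complex.I * y) + (s₀ : ℂ) / (Complex.I * y) +
            (s₁ : ℂ) / (Complex.I * y) ^ 2)‖)) :
    Integrable (fun t : ℝ => t ^ 2) σ ∧
    s₁ = ∫ t : ℝ, t ∂σ ∧
    Tendsto
      (fun y : ℝ => (Complex.I * y) ^ 3 *
        (n (Complex.I * y) + (s₀ : ℂ) / (Complex.I * y) +
          (s₁ : ℂ) / (Complex.I * y) ^ 2 +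
          ((∫ t : ℝ, t ^ 2 ∂σ : ℝ) : ℂ) / (Complex.I * y) ^ 3))
      (atTop ⊔ atBot) (nhds 0) := by
  obtain rfl : s₀ = σ.real Set.univ := hs₀
  have hn' : ∀ {y : ℝ}, y ≠ 0 → n (I * y) = cauchyTransform σ (I * y) := fun hy =>
    hn _ (by simpa using hy)
  obtain ⟨C, hC⟩ := hbd
  have h2 : Integrable (fun t : ℝ => t ^ 2) σ := by
    refine integrable_sq_of_integral_mul_sq_div_le (C := C) ?_
    filter_upwards [eventually_map.1 hC, eventually_ne_atTop 0] with y hyC hy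
    rw [integral_mul_sq_div_eq_neg_re σ hy s₁, ← hn' hy]
    exact (neg_le_abs _).trans ((abs_re_le_norm _).trans hyC)
  have h1 : Integrable (fun t : ℝ => t) σ :=
    ((memLp_two_iff_integrable_sq (by fun_prop)).2 h2).integrable one_le_two
  have hR : Tendsto (fun y : ℝ => (I * y) ^ 3 * (n (I * y) + σ.real Set.univ / (I * y) +
      (∫ t, t ∂σ : ℝ) / (I * y) ^ 2 + (∫ t, t ^ 2 ∂σ : ℝ) / (I * y) ^ 3))
      (atTop ⊔ atBot) (𝓝 0) := by
    refine (tendsto_integral_cube_mul_inv_ofReal_sub_I_mul σ h2).congr' ?_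
    filter_upwards [eventually_sup.2 ⟨eventually_ne_atTop 0, eventually_ne_atBot 0⟩] with y hy
    rw [hn' hy, cube_mul_cauchyTransform_add_moments σ (by simpa using hy) h1 h2]
  have hs₁ : s₁ = ∫ t, t ∂σ :=
    eq_of_isBoundedUnder_cube_mul_of_tendsto (a := fun y => n (I * y) + σ.real Set.univ / (I * y))
      ⟨C, hC⟩ (hR.mono_left le_sup_left)
  subst hs₁
  exact ⟨h2, rfl, hR⟩
end

section
/- Let p ≥ 1 and let n be a Nevanlinna function satisfying condition (1_p) with coefficients s₀,…,s_{2p} and s₀ > 0. Then the Schur transform n̂(z) = −s₀/n(z) − z + s₁/s₀ (well defined since n is nowhere zero on ℂ∖ℝ) satisfies condition (1_{p−1}) with coefficients ŝ₀,…,ŝ_{2p−2} given by ŝ_j = ((−1)^{j+1}/s₀^{j+2})·det M_j, where M_j is the (j+2)×(j+2) matrix whose (i,ℓ) entry (1 ≤ i, ℓ ≤ j+2) equals s_{i−ℓ+1} if i − ℓ + 1 ≥ 0 and 0 otherwise. -/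
open Filter Complex

noncomputable section

/-- Condition `(1_q)` with coefficients `s 0, …, s (2q)`:
`n(iy) = -s₀/(iy) - s₁/(iy)² - ⋯ - s_{2q}/(iy)^{2q+1} + o(|y|^{-(2q+1)})` as `y → ±∞`. -/
def Cond1 (n : ℂ → ℂ) (q : ℕ) (s : ℕ → ℝ) : Prop :=
  Tendsto
    (fun y : ℝ => (Complex.I * y) ^ (2 * q + 1) *
      (n (Complex.I * y) +
        ∑ j ∈ Finset.range (2 * q + 1), (s j : ℂ) / (Complex.I * y) ^ (j + 1)))
    (atTop ⊔ atBot) (nhds 0)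

/-- The coefficients `ŝ_j` of the Schur transform: `ŝ_j = ((-1)^{j+1}/s₀^{j+2})·det M_j`,
where `M_j` is the `(j+2)×(j+2)` matrix whose `(i,ℓ)` entry (`1 ≤ i,ℓ ≤ j+2`, here 0-based)
is `s_{i-ℓ+1}` when `i-ℓ+1 ≥ 0` and `0` otherwise. -/
def hatMoments (s : ℕ → ℝ) (j : ℕ) : ℝ :=
  ((-1 : ℝ) ^ (j + 1) / (s 0) ^ (j + 2)) *
    (Matrix.of fun i l : Fin (j + 2) =>
      if (l : ℕ) ≤ (i : ℕ) + 1 then s ((i : ℕ) + 1 - (l : ℕ)) else 0).det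

/-!
With `u = 1/(iy)`, condition `(1_p)` says that `f(y) = -(iy)·n(iy)` agrees with the truncation
`S(u) = s₀ + s₁u + ⋯ + s_{2p}u^{2p}` of the power series `φ = Σ sⱼXʲ` up to `o(u^{2p})`. As
`s₀ ≠ 0`, `φ` is invertible and `1/f` agrees with the truncation `D(u)` of `φ⁻¹` to the same
order. The Schur transform is `s₀·(iy)/f - iy + s₁/s₀`, and `s₀·(iy)·D(u) - iy + s₁/s₀` equals
`-Σ ŝⱼu^{j+1}`: Cramer's rule for the lower triangular Toeplitz system satisfied by the
coefficients of `φ⁻¹` expresses them as the Hessenberg determinants defining `ŝⱼ`.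

Moreover `f → s₀ ≠ 0`, so `n` does not vanish identically on the upper half-plane; there
`Im n ≥ 0`, so by the open mapping theorem `n` has no zeros there, and none in the lower
half-plane by symmetry.
-/

open Asymptotics Topology

def lowerToeplitz {R : Type*} [Zero R] (a : ℕ → R) (N : ℕ) : Matrix (Fin N) (Fin N) R :=
  Matrix.of fun i k => if (k : ℕ) ≤ i then a (i - k) else 0

def hessenbergToeplitz {R : Type*} [Zero R] (a : ℕ → R) (N : ℕ) : Matrix (Fin N) (Fin N) R :=
  Matrix.of fun i l => if (l : ℕ) ≤ i + 1 then a (i + 1 - l) else 0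

section Toeplitz

open Matrix

variable {R : Type*} [CommRing R]

theorem det_lowerToeplitz (a : ℕ → R) (N : ℕ) : (lowerToeplitz a N).det = a 0 ^ N := by
  rw [(lowerToeplitz a N).det_of_isLowerTriangular]
  · simp [lowerToeplitz]
  · intro i k (h : i < k)
    exact if_neg (Fin.lt_def.mp h).not_ge

theorem det_updateCol_lowerToeplitz_last (a : ℕ → R) (N : ℕ) :
    ((lowerToeplitz a (N + 1)).updateCol (Fin.last N) (Pi.single 0 1)).det =
      (-1) ^ N * (hessenbergToeplitz a N).det := by
  rw [det_succ_column _ (Fin.last N), Fin.sum_univ_succ, Finset.sum_eq_zero]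
  · have hminor : ((lowerToeplitz a (N + 1)).updateCol (Fin.last N) (Pi.single 0 1)).submatrix
        Fin.succ Fin.castSucc = hessenbergToeplitz a N :=
      Matrix.ext fun i l => by
        rw [submatrix_apply, updateCol_ne (Fin.castSucc_lt_last l).ne]
        simp only [lowerToeplitz, hessenbergToeplitz, of_apply, Fin.val_succ, Fin.val_castSucc]
    simp [hminor]
  · intro i _
    simp [Fin.succ_ne_zero]

theorem Matrix.cramer_mulVec {n : Type*} [Fintype n] [DecidableEq n] (A : Matrix n n R)
    (x : n → R) : A.cramer (A *ᵥ x) = A.det • x := by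
  rw [cramer_eq_adjugate_mulVec, mulVec_mulVec, adjugate_mul, smul_mulVec, one_mulVec]

variable {K : Type*} [Field K]

theorem lowerToeplitz_mulVec_coeff_inv (a : ℕ → K) (ha : a 0 ≠ 0) (N : ℕ) :
    lowerToeplitz a (N + 1) *ᵥ (fun k => PowerSeries.coeff k (PowerSeries.mk a)⁻¹) =
      Pi.single 0 1 := by
  ext i
  have h := congrArg (PowerSeries.coeff (i : ℕ))
    (PowerSeries.inv_mul_cancel (PowerSeries.mk a) (by simpa using ha))
  rw [PowerSeries.coeff_mul, Finset.Nat.sum_antidiagonal_eq_sum_range_succ_mk,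
    PowerSeries.coeff_one] at h
  simp only [PowerSeries.coeff_mk] at h
  simp only [mulVec, dotProduct, lowerToeplitz, of_apply]
  rw [Fin.sum_univ_eq_sum_range (fun k => (if k ≤ (i : ℕ) then a (i - k) else 0) *
      PowerSeries.coeff k (PowerSeries.mk a)⁻¹),
    ← Finset.sum_range_add_sum_Ico _ (Nat.succ_le_of_lt i.is_lt),
    Finset.sum_eq_zero (s := Finset.Ico _ _) fun k hk => by
      rw [if_neg (by simp at hk; omega), zero_mul],
    add_zero, Finset.sum_congr rfl fun k hk => by
      rw [if_pos (Nat.lt_succ_iff.mp (Finset.mem_range.mp hk)), mul_comm],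
    h, Pi.single_apply]
  exact if_congr Fin.val_eq_zero_iff rfl rfl

theorem PowerSeries.pow_mul_coeff_inv_mk (a : ℕ → K) (ha : a 0 ≠ 0) (N : ℕ) :
    a 0 ^ (N + 1) * coeff N (mk a)⁻¹ = (-1) ^ N * (hessenbergToeplitz a N).det := by
  have h := congrFun ((lowerToeplitz a (N + 1)).cramer_mulVec fun k => coeff k (mk a)⁻¹)
    (Fin.last N)
  rwa [lowerToeplitz_mulVec_coeff_inv a ha, cramer_apply, det_updateCol_lowerToeplitz_last,
    det_lowerToeplitz, Pi.smul_apply, smul_eq_mul, Fin.val_last, eq_comm] at h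

end Toeplitz

namespace PowerSeries

theorem eval_trunc_eq_sum_range {R : Type*} [CommRing R] (u : R) (n : ℕ) (φ : PowerSeries R) :
    (trunc n φ).eval u = ∑ i ∈ Finset.range n, coeff i φ * u ^ i :=
  eval₂_trunc_eq_sum_range u (RingHom.id R) n φ

theorem eval_trunc_add_two {R : Type*} [CommRing R] (ψ : PowerSeries R) (M : ℕ) (u : R) :
    (trunc (M + 2) ψ).eval u =
      coeff 0 ψ + coeff 1 ψ * u + u ^ 2 * ∑ k ∈ Finset.range M, coeff (k + 2) ψ * u ^ k := by
  rw [eval_trunc_eq_sum_range, Finset.sum_range_succ', Finset.sum_range_succ', Finset.mul_sum,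
    Finset.sum_congr rfl fun k _ => (by ring : coeff (k + 1 + 1) ψ * u ^ (k + 1 + 1) =
      u ^ 2 * (coeff (k + 2) ψ * u ^ k))]
  ring

theorem exists_trunc_mul_trunc_inv {K : Type*} [Field K] {φ : PowerSeries K}
    (hφ : constantCoeff φ ≠ 0) (N : ℕ) :
    ∃ R : Polynomial K, trunc (N + 1) φ * trunc (N + 1) φ⁻¹ = 1 + Polynomial.X ^ (N + 1) * R := by
  suffices Polynomial.X ^ (N + 1) ∣ trunc (N + 1) φ * trunc (N + 1) φ⁻¹ - 1 by
    obtain ⟨R, hR⟩ := this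
    exact ⟨R, by rw [← hR]; ring⟩
  refine Polynomial.X_pow_dvd_iff.mpr fun d hd => ?_
  rw [Polynomial.coeff_sub, ← Polynomial.coeff_coe, Polynomial.coe_mul,
    ← coeff_mul_eq_coeff_trunc_mul_trunc _ _ hd, PowerSeries.mul_inv_cancel φ hφ,
    Polynomial.coeff_one, coeff_one, sub_self]

variable {α 𝕜 : Type*} [NormedField 𝕜] {l : Filter α} {u : α → 𝕜}

theorem tendsto_eval_trunc (hu : Tendsto u l (𝓝 0)) (φ : PowerSeries 𝕜) (N : ℕ) :
    Tendsto (fun x => (trunc (N + 1) φ).eval (u x)) l (𝓝 (constantCoeff φ)) := by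
  have h := ((trunc (N + 1) φ).continuous.tendsto 0).comp hu
  rwa [← Polynomial.coeff_zero_eq_eval_zero, coeff_trunc, if_pos N.succ_pos,
    coeff_zero_eq_constantCoeff_apply] at h

theorem tendsto_of_isLittleO_sub_eval_trunc (hu : Tendsto u l (𝓝 0)) {φ : PowerSeries 𝕜}
    {f : α → 𝕜} {N : ℕ}
    (hf : (fun x => f x - (trunc (N + 1) φ).eval (u x)) =o[l] fun x => u x ^ N) :
    Tendsto f l (𝓝 (constantCoeff φ)) := by
  have h := (isLittleO_one_iff 𝕜).mp (hf.trans_isBigO ((hu.pow N).isBigO_one 𝕜))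
  simpa using h.add (tendsto_eval_trunc hu φ N)

theorem isLittleO_inv_sub_eval_trunc_inv (hu : Tendsto u l (𝓝 0)) {φ : PowerSeries 𝕜}
    (hφ : constantCoeff φ ≠ 0) {f : α → 𝕜} {N : ℕ}
    (hf : (fun x => f x - (trunc (N + 1) φ).eval (u x)) =o[l] fun x => u x ^ N) :
    (fun x => (f x)⁻¹ - (trunc (N + 1) φ⁻¹).eval (u x)) =o[l] fun x => u x ^ N := by
  obtain ⟨R, hSD⟩ := exists_trunc_mul_trunc_inv hφ N
  have hf_lim := tendsto_of_isLittleO_sub_eval_trunc hu hf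
  have hD := (tendsto_eval_trunc hu φ⁻¹ N).isBigO_one 𝕜
  have hR := ((R.continuous.tendsto 0).comp hu).isBigO_one 𝕜
  have hpow : (fun x => u x * (u x ^ N * R.eval (u x))) =o[l] fun x => u x ^ N := by
    simpa using ((isLittleO_one_iff 𝕜).mpr hu).mul_isBigO ((isBigO_refl _ l).mul hR)
  have hrem := ((hf_lim.inv₀ hφ).isBigO_one 𝕜).mul_isLittleO
    (hpow.add (by simpa using hf.mul_isBigO hD))
  refine hrem.neg_left.congr' ?_ (by simp)
  filter_upwards [hf_lim.eventually_ne hφ] with x hx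
  have hSDx := congrArg (Polynomial.eval (u x)) hSD
  simp only [Polynomial.eval_mul, Polynomial.eval_add, Polynomial.eval_one, Polynomial.eval_pow,
    Polynomial.eval_X] at hSDx
  field_simp
  linear_combination hSDx

end PowerSeries

theorem Asymptotics.IsLittleO.inv_mul_of_pow_succ {α 𝕜 : Type*} [NormedField 𝕜] {l : Filter α}
    {u g : α → 𝕜} {k : ℕ} (hu : ∀ᶠ x in l, u x ≠ 0) (hg : g =o[l] fun x => u x ^ (k + 1)) :
    (fun x => (u x)⁻¹ * g x) =o[l] fun x => u x ^ k :=
  ((isBigO_refl (fun x => (u x)⁻¹) l).mul_isLittleO hg).congr' EventuallyEq.rfl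
    (hu.mono fun x hx => by dsimp only; rw [pow_succ', inv_mul_cancel_left₀ hx])

theorem isLittleO_inv_pow_iff {α 𝕜 : Type*} [NormedField 𝕜] {l : Filter α} {z g : α → 𝕜}
    (k : ℕ) (hz : ∀ᶠ x in l, z x ≠ 0) :
    g =o[l] (fun x => (z x)⁻¹ ^ k) ↔ Tendsto (fun x => z x ^ k * g x) l (𝓝 0) := by
  rw [isLittleO_iff_tendsto' (hz.mono fun x hx h => absurd h (by simp [hx]))]
  exact tendsto_congr fun x => by rw [inv_pow, div_inv_eq_mul, mul_comm]

theorem sum_div_pow_succ_eq_inv_mul_eval_trunc {K : Type*} [Field K] (c : ℕ → K) (n : ℕ)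
    (z : K) : ∑ j ∈ Finset.range n, c j / z ^ (j + 1) =
      z⁻¹ * (PowerSeries.trunc n (PowerSeries.mk c)).eval z⁻¹ := by
  rw [PowerSeries.eval_trunc_eq_sum_range, Finset.mul_sum]
  refine Finset.sum_congr rfl fun j _ => ?_
  rw [PowerSeries.coeff_mk, inv_pow, pow_succ, div_eq_mul_inv, mul_inv]
  ring

theorem tendsto_inv_I_mul_ofReal :
    Tendsto (fun y : ℝ => (I * y)⁻¹) (atTop ⊔ atBot) (𝓝[≠] 0) := by
  refine tendsto_inv₀_cobounded'.comp (tendsto_norm_atTop_iff_cobounded.mp ?_)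
  simpa using tendsto_abs_atTop_atTop.sup tendsto_abs_atBot_atTop

theorem cond1_iff_isLittleO (n : ℂ → ℂ) (q : ℕ) (s : ℕ → ℝ) :
    Cond1 n q s ↔ (fun y : ℝ => n (I * y) + (I * y)⁻¹ *
      (PowerSeries.trunc (2 * q + 1) (PowerSeries.mk fun j => (s j : ℂ))).eval (I * y)⁻¹)
        =o[atTop ⊔ atBot] fun y => (I * y)⁻¹ ^ (2 * q + 1) := by
  have hz : ∀ᶠ y : ℝ in atTop ⊔ atBot, I * y ≠ 0 := by
    simpa using (tendsto_nhdsWithin_iff.mp tendsto_inv_I_mul_ofReal).2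
  simp only [Cond1, isLittleO_inv_pow_iff _ hz, sum_div_pow_succ_eq_inv_mul_eval_trunc]

theorem AnalyticOnNhd.exists_eqOn_const_or_im_pos {n : ℂ → ℂ} {U : Set ℂ}
    (hn : AnalyticOnNhd ℂ n U) (hU : IsOpen U) (hUc : IsPreconnected U)
    (him : ∀ z ∈ U, 0 ≤ (n z).im) : (∃ w, ∀ z ∈ U, n z = w) ∨ ∀ z ∈ U, 0 < (n z).im := by
  refine (hn.is_constant_or_isOpen hUc).imp_right fun hopen z hz => ?_
  have h : n '' U ⊆ interior {w : ℂ | 0 ≤ w.im} :=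
    (hopen U subset_rfl hU).subset_interior_iff.mpr (Set.image_subset_iff.mpr him)
  simpa using h ⟨z, hz, rfl⟩

theorem IsNevanlinna.ne_zero {n : ℂ → ℂ} (hn : IsNevanlinna n)
    (hz₀ : ∃ z₀, 0 < z₀.im ∧ n z₀ ≠ 0) {z : ℂ} (hz : z.im ≠ 0) : n z ≠ 0 := by
  have hupper : ∀ z : ℂ, 0 < z.im → n z ≠ 0 := by
    have hU : IsOpen {z : ℂ | 0 < z.im} := isOpen_lt continuous_const continuous_im
    have han : AnalyticOnNhd ℂ n {z : ℂ | 0 < z.im} :=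
      hU.analyticOn_iff_analyticOnNhd.mp (hn.1.mono fun z hz => ne_of_gt hz)
    rcases han.exists_eqOn_const_or_im_pos hU (convex_halfSpace_im_gt 0).isPreconnected hn.2.2
      with ⟨w, hw⟩ | hpos
    · obtain ⟨z₀, hz₀, hnz₀⟩ := hz₀
      exact fun z hz => hw z hz ▸ hw z₀ hz₀ ▸ hnz₀
    · exact fun z hz h => by simpa [h] using hpos z hz
  rcases hz.lt_or_gt with him_neg | him_pos
  · have hconj := hn.2.1 ((starRingEnd ℂ) z) (by simpa using him_neg.ne)
    rw [Complex.conj_conj] at hconj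
    rw [hconj, map_ne_zero]
    exact hupper _ (by simpa using him_neg)
  · exact hupper z him_pos

theorem hatMoments_eq_coeff_inv (s : ℕ → ℝ) (hs : s 0 ≠ 0) (j : ℕ) :
    (hatMoments s j : ℂ) =
      -(s 0 : ℂ) * PowerSeries.coeff (j + 2) (PowerSeries.mk fun j => (s j : ℂ))⁻¹ := by
  have hs' : (s 0 : ℂ) ≠ 0 := by exact_mod_cast hs
  have h := PowerSeries.pow_mul_coeff_inv_mk (fun j => (s j : ℂ)) hs' (j + 2)
  have hdet : (hessenbergToeplitz (fun j => (s j : ℂ)) (j + 2)).det =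
      ((hessenbergToeplitz s (j + 2)).det : ℂ) := by
    rw [← Complex.ofRealHom_eq_coe, RingHom.map_det]
    congr 1
    ext i l
    simp only [hessenbergToeplitz, RingHom.mapMatrix_apply, Matrix.map_apply, Matrix.of_apply]
    split_ifs <;> simp
  change (((-1) ^ (j + 1) / s 0 ^ (j + 2) * (hessenbergToeplitz s (j + 2)).det : ℝ) : ℂ) = _
  push_cast
  rw [← hdet]
  field_simp
  linear_combination h

theorem schur_transform_add_eq (s : ℕ → ℝ) (hs : s 0 ≠ 0) (M : ℕ) {z : ℂ} (hz : z ≠ 0)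
    (w : ℂ) : -(s 0 : ℂ) / w - z + (s 1 : ℂ) / (s 0 : ℂ) +
        z⁻¹ * (PowerSeries.trunc M (PowerSeries.mk fun k => (hatMoments s k : ℂ))).eval z⁻¹ =
      z * ((s 0 : ℂ) * ((-z * w)⁻¹ -
        (PowerSeries.trunc (M + 2) (PowerSeries.mk fun j => (s j : ℂ))⁻¹).eval z⁻¹)) := by
  have hs' : (s 0 : ℂ) ≠ 0 := by exact_mod_cast hs
  have hc₀ := PowerSeries.pow_mul_coeff_inv_mk (fun j => (s j : ℂ)) hs' 0
  have hc₁ := PowerSeries.pow_mul_coeff_inv_mk (fun j => (s j : ℂ)) hs' 1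
  simp only [zero_add, pow_one, pow_zero, Matrix.det_fin_zero, mul_one] at hc₀
  simp only [hessenbergToeplitz, Matrix.det_unique, Matrix.of_apply, Fin.default_eq_zero,
    Fin.val_zero, zero_add, zero_le, if_true, tsub_zero, pow_one, neg_one_mul] at hc₁
  simp only [PowerSeries.eval_trunc_add_two, PowerSeries.eval_trunc_eq_sum_range,
    PowerSeries.coeff_mk, hatMoments_eq_coeff_inv s hs, ← Finset.mul_sum, mul_assoc]
  field_simp
  linear_combination z ^ 2 * s 0 * hc₀ + z * hc₁

/-- if the Nevanlinna function `n` satisfies `(1_p)` with coefficients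
`s₀,…,s_{2p}`, `s₀ > 0`, then `n` is nowhere zero on `ℂ ∖ ℝ` and the Schur transform
`n̂(z) = -s₀/n(z) - z + s₁/s₀` satisfies `(1_{p-1})` with coefficients `ŝ_j`. -/
theorem schur_transform_coefficients (p : ℕ) (hp : 1 ≤ p) (n : ℂ → ℂ)
    (hn : IsNevanlinna n) (s : ℕ → ℝ) (hs₀ : 0 < s 0) (h1p : Cond1 n p s) :
    (∀ z : ℂ, z.im ≠ 0 → n z ≠ 0) ∧
    Cond1 (fun z : ℂ => -(s 0 : ℂ) / n z - z + (s 1 : ℂ) / (s 0 : ℂ)) (p - 1)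
      (hatMoments s) := by
  obtain ⟨q, rfl⟩ : ∃ q, p = q + 1 := ⟨p - 1, by omega⟩
  obtain ⟨hu, hu₀⟩ := tendsto_nhdsWithin_iff.mp tendsto_inv_I_mul_ofReal
  have hφ : PowerSeries.constantCoeff (PowerSeries.mk fun j => (s j : ℂ)) ≠ 0 := by
    simpa using hs₀.ne'
  have hf : (fun y : ℝ => -(I * y) * n (I * y) - (PowerSeries.trunc (2 * (q + 1) + 1)
      (PowerSeries.mk fun j => (s j : ℂ))).eval (I * y)⁻¹) =o[atTop ⊔ atBot]
        fun y => (I * y)⁻¹ ^ (2 * q + 2) := by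
    refine (((cond1_iff_isLittleO n (q + 1) s).mp h1p).inv_mul_of_pow_succ hu₀).neg_left.congr'
      ?_ EventuallyEq.rfl
    filter_upwards [hu₀] with y hy
    rw [inv_inv, mul_add, mul_inv_cancel_left₀ (inv_eq_zero.not.mp hy)]
    ring
  refine ⟨fun z hz => hn.ne_zero ?_ hz, ?_⟩
  · obtain ⟨y, hfy, hy⟩ := ((PowerSeries.tendsto_of_isLittleO_sub_eval_trunc hu hf).mono_left
      le_sup_left |>.eventually_ne hφ |>.and (eventually_gt_atTop 0)).exists
    exact ⟨I * y, by simpa using hy, right_ne_zero_of_mul hfy⟩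
  · rw [Nat.add_sub_cancel, cond1_iff_isLittleO]
    refine (((PowerSeries.isLittleO_inv_sub_eval_trunc_inv hu hφ hf).const_mul_left
      (s 0 : ℂ)).inv_mul_of_pow_succ hu₀).congr' ?_ EventuallyEq.rfl
    filter_upwards [hu₀] with y hy
    rw [inv_inv]
    exact (schur_transform_add_eq s hs₀.ne' (2 * q + 1) (inv_eq_zero.not.mp hy) _).symm
end
end

section
/- Let 𝒜₀ be the p×p Jacobi matrix with diagonal a₀,…,a_{p−1} and off-diagonal b₀,…,b_{p−2}, let δ₀ and δ_{p−1} be the first and last standard basis vectors of ℂ^p, and let z ∈ ℂ with e_p(z) ≠ 0. Then 𝒜₀ − zI is invertible and (𝒜₀ − zI)^{−1} δ_{p−1} = −(1/(b_{p−1}·e_p(z)))·(e₀(z), e₁(z), …, e_{p−1}(z))ᵀ. In particular, the (p−1,p−1) entry of (𝒜₀ − zI)^{−1} equals −e_{p−1}(z)/(b_{p−1}·e_p(z)), and √s₀ times its (0,p−1) entry equals −1/(b_{p−1}·e_p(z)). -/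
/-! The vector `(e₀(z), …, e_{p-1}(z))` satisfies every row of `(𝒜₀ - z) v = 0` except the
last one, where the missing coupling to `e_p(z)` leaves `-b_{p-1} e_p(z)`; hence, once `𝒜₀ - z`
is known to be invertible, this vector is `-b_{p-1} e_p(z)` times the last column of the
resolvent. For invertibility, a vector in the kernel, extended by `0` at index `p`, solves the
same three-term recurrence as `e`, so it is a multiple of `e`; since `e_p(z) ≠ 0` while the
extension vanishes at `p`, the multiple is zero. -/

open Matrix

noncomputable section

/-- The `p×p` Jacobi matrix with diagonal entries `a₀,…,a_{p-1}` and sub- and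
superdiagonal entries `b₀,…,b_{p-2}`. -/
def jacobiMatrix (p : ℕ) (a b : ℕ → ℝ) : Matrix (Fin p) (Fin p) ℝ :=
  Matrix.of fun i j =>
    if (i : ℕ) = (j : ℕ) then a (i : ℕ)
    else if (i : ℕ) + 1 = (j : ℕ) then b (i : ℕ)
    else if (j : ℕ) + 1 = (i : ℕ) then b (j : ℕ)
    else 0

/-- The `k`-th entry of `(𝒜 - z) u` for the semi-infinite Jacobi matrix `𝒜` with diagonal `a`
and off-diagonal `b`. -/
def jacobiRow (a b : ℕ → ℝ) (z : ℂ) (u : ℕ → ℂ) : ℕ → ℂ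
  | 0 => (a 0 - z) * u 0 + b 0 * u 1
  | k + 1 => b k * u k + (a (k + 1) - z) * u (k + 1) + b (k + 1) * u (k + 2)

section JacobiRow

variable {a b : ℕ → ℝ} {z : ℂ}

lemma jacobiRow_smul_sub_smul (c d : ℂ) (u v : ℕ → ℂ) (k : ℕ) :
    jacobiRow a b z (c • u - d • v) k = c * jacobiRow a b z u k - d * jacobiRow a b z v k := by
  cases k <;> simp only [jacobiRow, Pi.sub_apply, Pi.smul_apply, smul_eq_mul] <;> ring

lemma eq_zero_of_jacobiRow_eq_zero {n : ℕ} (hb : ∀ k < n, (b k : ℂ) ≠ 0) {u : ℕ → ℂ}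
    (hu : ∀ k < n, jacobiRow a b z u k = 0) (hu0 : u 0 = 0) : ∀ k ≤ n, u k = 0 := by
  have hpair : ∀ k, k + 1 ≤ n → u k = 0 ∧ u (k + 1) = 0 := by
    intro k
    induction k with
    | zero =>
      intro hn
      have hrow := hu 0 (by omega)
      simp only [jacobiRow, hu0, mul_zero, zero_add, mul_eq_zero] at hrow
      exact ⟨hu0, hrow.resolve_left (hb 0 (by omega))⟩
    | succ k ih =>
      intro hn
      obtain ⟨hk, hk1⟩ := ih (by omega)
      have hrow := hu (k + 1) (by omega)
      simp only [jacobiRow, hk, hk1, mul_zero, zero_add, mul_eq_zero] at hrow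
      exact ⟨hk1, hrow.resolve_left (hb (k + 1) (by omega))⟩
  rintro (_ | k) hk
  · exact hu0
  · exact (hpair k hk).2

/-- `u` is `u 0 / y 0` times `y`, and `y n ≠ 0` forces that multiple to vanish. -/
lemma eq_zero_of_jacobiRow_eq_zero_of_apply_eq_zero {n : ℕ} (hb : ∀ k < n, (b k : ℂ) ≠ 0)
    {u y : ℕ → ℂ} (hu : ∀ k < n, jacobiRow a b z u k = 0)
    (hy : ∀ k < n, jacobiRow a b z y k = 0) (hy0 : y 0 ≠ 0) (hyn : y n ≠ 0) (hun : u n = 0) :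
    ∀ k ≤ n, u k = 0 := by
  have hw : ∀ k ≤ n, (y 0 • u - u 0 • y) k = 0 :=
    eq_zero_of_jacobiRow_eq_zero hb
      (fun k hk => by rw [jacobiRow_smul_sub_smul, hu k hk, hy k hk]; ring)
      (by simp only [Pi.sub_apply, Pi.smul_apply, smul_eq_mul]; ring)
  have hu0 : u 0 = 0 := by
    simpa [hun, hyn] using hw n le_rfl
  intro k hk
  simpa [hu0, hy0] using hw k hk

end JacobiRow

section JacobiMatrix

variable {p : ℕ} {a b : ℕ → ℝ} {z : ℂ}

lemma jacobiMatrix_sub_smul_mulVec_apply (u : ℕ → ℂ) (i : Fin p) :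
    (((jacobiMatrix p a b).map Complex.ofReal - z • (1 : Matrix (Fin p) (Fin p) ℂ)) *ᵥ
      fun j : Fin p => u j) i =
      jacobiRow a b z u i - if (i : ℕ) + 1 = p then (b i : ℂ) * u p else 0 := by
  rw [sub_mulVec, smul_mulVec, one_mulVec]
  simp only [Pi.sub_apply, Pi.smul_apply, smul_eq_mul, mulVec, dotProduct, map_apply,
    jacobiMatrix, of_apply]
  rw [Fin.sum_univ_eq_sum_range (fun j => ((if (i : ℕ) = j then a i
    else if (i : ℕ) + 1 = j then b i else if j + 1 = (i : ℕ) then b j else 0 : ℝ) : ℂ) * u j),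
    Finset.sum_congr rfl (g := fun j => (if j = (i : ℕ) then (a i : ℂ) * u j else 0) +
      (if j = i + 1 then (b i : ℂ) * u j else 0) +
      (if j + 1 = i then (b j : ℂ) * u j else 0))
      (fun j _ => by split_ifs <;> first | omega | (subst_vars; simp))]
  obtain ⟨_ | k, hi⟩ := i
  all_goals
    simp only [Finset.sum_add_distrib, Finset.sum_ite_eq', Finset.mem_range, hi, jacobiRow,
      Nat.add_right_cancel_iff, Nat.add_eq_zero_iff, one_ne_zero, and_false, ↓reduceIte,
      zero_add, add_zero]
    split_ifs <;> first | omega | (subst_vars; ring)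

lemma isUnit_jacobiMatrix_sub_smul (hb : ∀ k < p, (b k : ℂ) ≠ 0) {y : ℕ → ℂ}
    (hy : ∀ k < p, jacobiRow a b z y k = 0) (hy0 : y 0 ≠ 0) (hyp : y p ≠ 0) :
    IsUnit ((jacobiMatrix p a b).map Complex.ofReal - z • (1 : Matrix (Fin p) (Fin p) ℂ)) := by
  refine mulVec_injective_iff_isUnit.mp ((injective_iff_map_eq_zero (mulVecLin _)).mpr ?_)
  intro w hw
  set u : ℕ → ℂ := fun k => if h : k < p then w ⟨k, h⟩ else 0
  have hwu : w = fun j : Fin p => u j := funext fun j => by simp [u]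
  have hup : u p = 0 := dif_neg (lt_irrefl p)
  have hu : ∀ k < p, jacobiRow a b z u k = 0 := by
    intro k hk
    have hrow := congrFun hw ⟨k, hk⟩
    rw [mulVecLin_apply, hwu, jacobiMatrix_sub_smul_mulVec_apply, hup, mul_zero, ite_self,
      sub_zero] at hrow
    exact hrow
  have hu_zero := eq_zero_of_jacobiRow_eq_zero_of_apply_eq_zero hb hu hy hy0 hyp hup
  exact hwu.trans (funext fun j => hu_zero j j.2.le)

lemma jacobiMatrix_sub_smul_inv_mulVec_single_last (hp : 1 ≤ p)
    (hb : ∀ k < p, (b k : ℂ) ≠ 0) {y : ℕ → ℂ} (hy : ∀ k < p, jacobiRow a b z y k = 0)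
    (hy0 : y 0 ≠ 0) (hyp : y p ≠ 0) :
    ((jacobiMatrix p a b).map Complex.ofReal - z • (1 : Matrix (Fin p) (Fin p) ℂ))⁻¹ *ᵥ
      Pi.single (⟨p - 1, Nat.sub_lt hp Nat.one_pos⟩ : Fin p) 1 =
      fun i : Fin p => -(1 / ((b (p - 1) : ℂ) * y p)) * y i := by
  set M := (jacobiMatrix p a b).map Complex.ofReal - z • (1 : Matrix (Fin p) (Fin p) ℂ)
  set c := -(1 / ((b (p - 1) : ℂ) * y p)) with hc
  have hMy : M *ᵥ (c • fun i : Fin p => y i) =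
      Pi.single (⟨p - 1, Nat.sub_lt hp Nat.one_pos⟩ : Fin p) 1 := by
    ext i
    rw [mulVec_smul, Pi.smul_apply, jacobiMatrix_sub_smul_mulVec_apply, hy i i.2,
      Pi.single_apply, smul_eq_mul]
    by_cases hi : (i : ℕ) + 1 = p
    · have hbp := hb (p - 1) (by omega)
      rw [if_pos hi, if_pos (Fin.ext (by simp only; omega)), show (i : ℕ) = p - 1 by omega,
        hc]
      field_simp
      ring
    · rw [if_neg hi, if_neg (fun h => hi (by rw [h]; simp only; omega))]
      simp
  rw [← hMy, mulVec_mulVec,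
    nonsing_inv_mul M ((isUnit_iff_isUnit_det M).mp (isUnit_jacobiMatrix_sub_smul hb hy hy0 hyp)),
    one_mulVec]
  rfl

end JacobiMatrix

/-- if `e_p(z) ≠ 0` then `𝒜₀ - zI` is invertible, and its inverse applied to
the last standard basis vector `δ_{p-1}` equals
`-(1/(b_{p-1}e_p(z)))·(e₀(z),…,e_{p-1}(z))ᵀ`; in particular, the `(p-1,p-1)` entry of
`(𝒜₀ - zI)⁻¹` is `-e_{p-1}(z)/(b_{p-1}e_p(z))` and `√s₀` times its `(0,p-1)` entry is
`-1/(b_{p-1}e_p(z))`. -/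
theorem jacobi_resolvent_last_column (p : ℕ) (hp : 1 ≤ p) (s₀ : ℝ) (hs₀ : 0 < s₀)
    (a b : ℕ → ℝ) (hb : ∀ k < p, 0 < b k)
    (e : ℕ → ℂ → ℂ)
    (he0 : ∀ z : ℂ, e 0 z = 1 / (Real.sqrt s₀ : ℂ))
    (he1 : ∀ z : ℂ, e 1 z = (z - (a 0 : ℂ)) / ((b 0 : ℂ) * (Real.sqrt s₀ : ℂ)))
    (hrecE : ∀ k, 1 ≤ k → k ≤ p - 1 → ∀ z : ℂ,
      (b (k - 1) : ℂ) * e (k - 1) z + (a k : ℂ) * e k z + (b k : ℂ) * e (k + 1) z =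
        z * e k z)
    (z : ℂ) (hz : e p z ≠ 0)
    (M : Matrix (Fin p) (Fin p) ℂ)
    (hM : M = ((jacobiMatrix p a b).map Complex.ofReal) - z • (1 : Matrix (Fin p) (Fin p) ℂ)) :
    IsUnit M ∧
    (M⁻¹.mulVec (Pi.single (⟨p - 1, by omega⟩ : Fin p) 1) =
      fun i : Fin p => -(1 / ((b (p - 1) : ℂ) * e p z)) * e (i : ℕ) z) ∧
    M⁻¹ ⟨p - 1, by omega⟩ ⟨p - 1, by omega⟩ =
      -(e (p - 1) z) / ((b (p - 1) : ℂ) * e p z) ∧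
    (Real.sqrt s₀ : ℂ) * M⁻¹ ⟨0, by omega⟩ ⟨p - 1, by omega⟩ =
      -(1 / ((b (p - 1) : ℂ) * e p z)) := by
  have hbC : ∀ k < p, (b k : ℂ) ≠ 0 := fun k hk => Complex.ofReal_ne_zero.mpr (hb k hk).ne'
  have hS : (Real.sqrt s₀ : ℂ) ≠ 0 := Complex.ofReal_ne_zero.mpr (Real.sqrt_pos.mpr hs₀).ne'
  have hrow : ∀ k < p, jacobiRow a b z (fun k => e k z) k = 0 := by
    rintro (_ | k) hk
    · have hb0 := hbC 0 hk
      simp only [jacobiRow, he0, he1]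
      field_simp
      ring
    · have hrec := hrecE (k + 1) (by omega) (by omega) z
      rw [Nat.add_sub_cancel] at hrec
      simp only [jacobiRow]
      linear_combination hrec
  have he0z : e 0 z ≠ 0 := by simpa [he0] using hS
  have hcol : M⁻¹ *ᵥ Pi.single (⟨p - 1, Nat.sub_lt hp Nat.one_pos⟩ : Fin p) 1 =
      fun i : Fin p => -(1 / ((b (p - 1) : ℂ) * e p z)) * e i z := by
    rw [hM]
    exact jacobiMatrix_sub_smul_inv_mulVec_single_last (y := fun k => e k z) hp hbC hrow he0z hz
  have hentry (i : Fin p) : M⁻¹ i ⟨p - 1, Nat.sub_lt hp Nat.one_pos⟩ =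
      -(1 / ((b (p - 1) : ℂ) * e p z)) * e i z := by
    simpa only [mulVec_single_one, col_apply] using congrFun hcol i
  refine ⟨hM ▸ isUnit_jacobiMatrix_sub_smul hbC hrow he0z hz, hcol, ?_, ?_⟩
  · rw [hentry]
    ring
  · rw [hentry, he0 z]
    field_simp
end
end

section
/- Let V(z) be the 2×2 matrix polynomial V(z) = [[−d_{p−1}(z), −b_{p−1}·d_p(z)], [e_{p−1}(z), b_{p−1}·e_p(z)]] and J = [[0,1],[−1,0]]. Then det V(z) = 1 for all z ∈ ℂ, and for all z, w ∈ ℂ with z ≠ conj(w): (J − V(z)·J·V(w)^*)/(z − conj(w)) = Σ_{k=0}^{p−1} c_k(z)·c_k(w)^*, where c_k(z) is the column vector (d_k(z), −e_k(z))ᵀ and ^* denotes conjugate transpose. In particular, the kernel K_V(z,w) = (J − V(z)JV(w)^*)/(z − conj(w)) is a positive semidefinite (nonnegative) kernel, and V(x)·J·V(x)^* = J for every real x. -/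
open Matrix Finset
open scoped ComplexOrder

noncomputable section

/-! For solutions `f`, `g` of the three-term recurrence at spectral parameters `z` and `w`, the
sum `(z - w) ∑_{k ≤ n} f k * g k` telescopes (Christoffel–Darboux) to the Wronskian
`b n * (f (n + 1) * g n - f n * g (n + 1))` minus a boundary term at `0`. Apply this to the four
pairs drawn from `d`, `e` at `z` and `conj ∘ d`, `conj ∘ e` at `conj w` (the coefficients are
real). Arranged with the signs of `cₖ(z) cₖ(w)^*`, the Wronskians at `n = p - 1` form
`-V(z) J V(w)^*` and the boundary terms, computed from the initial values, form `-J`. With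
`z = w` the same telescoping makes the Wronskian of `d` and `e` constant, which is `det V = 1`;
positivity holds because `∑ₖ cₖ(z) cₖ(w)^*` is a sum of Gram kernels. -/

def SolvesJacobiRecurrence (a b : ℕ → ℝ) (n : ℕ) (z : ℂ) (f : ℕ → ℂ) : Prop :=
  ∀ k, 1 ≤ k → k ≤ n →
    (b (k - 1) : ℂ) * f (k - 1) + (a k : ℂ) * f k + (b k : ℂ) * f (k + 1) = z * f k

def jacobiWronskian (b : ℕ → ℝ) (f g : ℕ → ℂ) (n : ℕ) : ℂ :=
  b n * (f (n + 1) * g n - f n * g (n + 1))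

def jacobiBoundary (b : ℕ → ℝ) (z w : ℂ) (f g : ℕ → ℂ) : ℂ :=
  jacobiWronskian b f g 0 - (z - w) * (f 0 * g 0)

namespace SolvesJacobiRecurrence

variable {a b : ℕ → ℝ} {n : ℕ} {z : ℂ} {f : ℕ → ℂ}

theorem of_succ (hf : SolvesJacobiRecurrence a b (n + 1) z f) :
    SolvesJacobiRecurrence a b n z f :=
  fun k h₁ h₂ => hf k h₁ (h₂.trans n.le_succ)

theorem conj (hf : SolvesJacobiRecurrence a b n z f) :
    SolvesJacobiRecurrence a b n (starRingEnd ℂ z) (fun k => starRingEnd ℂ (f k)) := by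
  intro k h₁ h₂
  simpa only [map_add, map_mul, Complex.conj_ofReal] using
    congrArg (starRingEnd ℂ) (hf k h₁ h₂)

end SolvesJacobiRecurrence

section ChristoffelDarboux

variable {a b : ℕ → ℝ} {z w : ℂ} {f g : ℕ → ℂ}

theorem christoffel_darboux : ∀ {n}, SolvesJacobiRecurrence a b n z f →
    SolvesJacobiRecurrence a b n w g →
      (z - w) * ∑ k ∈ range (n + 1), f k * g k =
        jacobiWronskian b f g n - jacobiBoundary b z w f g
  | 0, _, _ => by simp [jacobiBoundary]
  | n + 1, hf, hg => by
    have ih := christoffel_darboux hf.of_succ hg.of_succ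
    have hfn := hf (n + 1) n.succ_pos' le_rfl
    have hgn := hg (n + 1) n.succ_pos' le_rfl
    simp only [Nat.add_sub_cancel] at hfn hgn
    rw [sum_range_succ]
    unfold jacobiWronskian at ih ⊢
    linear_combination ih - g (n + 1) * hfn + f (n + 1) * hgn

theorem jacobiWronskian_eq_jacobiWronskian_zero {n : ℕ} (hf : SolvesJacobiRecurrence a b n z f)
    (hg : SolvesJacobiRecurrence a b n z g) :
    jacobiWronskian b f g n = jacobiWronskian b f g 0 := by
  have h := christoffel_darboux hf hg
  rw [jacobiBoundary] at h
  linear_combination -h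

end ChristoffelDarboux

theorem det_eq_jacobiWronskian (b : ℕ → ℝ) (n : ℕ) (d e : ℕ → ℂ) :
    !![-d n, -(b n : ℂ) * d (n + 1); e n, (b n : ℂ) * e (n + 1)].det =
      jacobiWronskian b d e n := by
  rw [det_fin_two_of, jacobiWronskian]
  ring

theorem jacobiWronskian_zero_eq_one {s₀ : ℝ} (hs₀ : 0 < s₀) {b : ℕ → ℝ}
    (hb₀ : b 0 ≠ 0) {f g : ℕ → ℂ} (hf0 : f 0 = 0)
    (hf1 : f 1 = (Real.sqrt s₀ : ℂ) / (b 0 : ℂ)) (hg0 : g 0 = 1 / (Real.sqrt s₀ : ℂ)) :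
    jacobiWronskian b f g 0 = 1 := by
  have hsqrt : (Real.sqrt s₀ : ℂ) ≠ 0 := by exact_mod_cast (Real.sqrt_pos.2 hs₀).ne'
  have hb : (b 0 : ℂ) ≠ 0 := by exact_mod_cast hb₀
  rw [jacobiWronskian, zero_add, hf0, hf1, hg0]
  field_simp
  ring

theorem J_sub_mul_J_mul_conjTranspose_eq_smul_sum {a b : ℕ → ℝ} {n : ℕ} {z w : ℂ}
    {d₁ e₁ d₂ e₂ : ℕ → ℂ}
    (hd₁ : SolvesJacobiRecurrence a b n z d₁) (he₁ : SolvesJacobiRecurrence a b n z e₁)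
    (hd₂ : SolvesJacobiRecurrence a b n w d₂) (he₂ : SolvesJacobiRecurrence a b n w e₂)
    (hdd : jacobiBoundary b z (starRingEnd ℂ w) d₁ (starRingEnd ℂ <| d₂ ·) = 0)
    (hde : jacobiBoundary b z (starRingEnd ℂ w) d₁ (starRingEnd ℂ <| e₂ ·) = 1)
    (hed : jacobiBoundary b z (starRingEnd ℂ w) e₁ (starRingEnd ℂ <| d₂ ·) = -1)
    (hee : jacobiBoundary b z (starRingEnd ℂ w) e₁ (starRingEnd ℂ <| e₂ ·) = 0) :
    !![0, 1; -1, 0] - !![-d₁ n, -(b n : ℂ) * d₁ (n + 1); e₁ n, (b n : ℂ) * e₁ (n + 1)] *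
        !![0, 1; -1, 0] *
        (!![-d₂ n, -(b n : ℂ) * d₂ (n + 1); e₂ n, (b n : ℂ) * e₂ (n + 1)])ᴴ =
      (z - starRingEnd ℂ w) • ∑ k ∈ range (n + 1),
        (!![d₁ k; -e₁ k] : Matrix (Fin 2) (Fin 1) ℂ) * (!![d₂ k; -e₂ k])ᴴ := by
  have cdd := christoffel_darboux hd₁ hd₂.conj
  have cde := christoffel_darboux hd₁ he₂.conj
  have ced := christoffel_darboux he₁ hd₂.conj
  have cee := christoffel_darboux he₁ he₂.conj
  rw [hdd, jacobiWronskian] at cdd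
  rw [hde, jacobiWronskian] at cde
  rw [hed, jacobiWronskian] at ced
  rw [hee, jacobiWronskian] at cee
  ext i j
  fin_cases i <;> fin_cases j <;>
    simp only [Matrix.sub_apply, Matrix.smul_apply, Matrix.sum_apply, Matrix.mul_apply,
      conjTranspose_apply, Fin.sum_univ_two, Fin.sum_univ_one, of_apply, cons_val', cons_val_zero,
      cons_val_one, cons_val_fin_one, Fin.zero_eta, Fin.mk_one, Fin.isValue, RCLike.star_def,
      map_neg, map_mul, Complex.conj_ofReal, smul_eq_mul, mul_neg, neg_mul, neg_neg,
      sum_neg_distrib]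
  · linear_combination -cdd
  · linear_combination cde
  · linear_combination ced
  · linear_combination -cee

theorem jacobiBoundary_of_initial {s₀ : ℝ} (hs₀ : 0 < s₀) {a b : ℕ → ℝ}
    (hb₀ : b 0 ≠ 0) {e d : ℕ → ℂ → ℂ}
    (he0 : ∀ z : ℂ, e 0 z = 1 / (Real.sqrt s₀ : ℂ))
    (he1 : ∀ z : ℂ, e 1 z = (z - (a 0 : ℂ)) / ((b 0 : ℂ) * (Real.sqrt s₀ : ℂ)))
    (hd0 : ∀ z : ℂ, d 0 z = 0)
    (hd1 : ∀ z : ℂ, d 1 z = (Real.sqrt s₀ : ℂ) / (b 0 : ℂ)) (z w : ℂ) :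
    jacobiBoundary b z (starRingEnd ℂ w) (d · z) (starRingEnd ℂ <| d · w) = 0 ∧
    jacobiBoundary b z (starRingEnd ℂ w) (d · z) (starRingEnd ℂ <| e · w) = 1 ∧
    jacobiBoundary b z (starRingEnd ℂ w) (e · z) (starRingEnd ℂ <| d · w) = -1 ∧
    jacobiBoundary b z (starRingEnd ℂ w) (e · z) (starRingEnd ℂ <| e · w) = 0 := by
  have hsqrt : (Real.sqrt s₀ : ℂ) ≠ 0 := by exact_mod_cast (Real.sqrt_pos.2 hs₀).ne'
  have hb : (b 0 : ℂ) ≠ 0 := by exact_mod_cast hb₀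
  simp only [jacobiBoundary, jacobiWronskian, zero_add, hd0, hd1, he0, he1, map_zero, map_div₀,
    map_one, map_sub, map_mul, Complex.conj_ofReal]
  refine ⟨by ring, ?_, ?_, ?_⟩ <;> field_simp <;> ring

theorem sum_dotProduct_sum_mul_conjTranspose_mulVec_nonneg {R ι κ n m : Type*}
    [CommRing R] [StarRing R] [PartialOrder R] [StarOrderedRing R]
    [Fintype ι] [Fintype n] [Fintype m] (s : Finset κ) (c : κ → ι → Matrix n m R)
    (v : ι → n → R) :
    0 ≤ ∑ i, ∑ j, star (v i) ⬝ᵥ (∑ k ∈ s, c k i * (c k j)ᴴ) *ᵥ v j := by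
  have gram : ∀ k i j, star (v i) ⬝ᵥ (c k i * (c k j)ᴴ) *ᵥ v j =
      star ((c k i)ᴴ *ᵥ v i) ⬝ᵥ ((c k j)ᴴ *ᵥ v j) := by
    intro k i j
    rw [← mulVec_mulVec, dotProduct_mulVec, star_mulVec, conjTranspose_conjTranspose]
  calc ∑ i, ∑ j, star (v i) ⬝ᵥ (∑ k ∈ s, c k i * (c k j)ᴴ) *ᵥ v j
      = ∑ k ∈ s, ∑ i, ∑ j, star ((c k i)ᴴ *ᵥ v i) ⬝ᵥ ((c k j)ᴴ *ᵥ v j) := by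
        simp only [sum_mulVec, dotProduct_sum, gram]
        exact (sum_congr rfl fun i _ => sum_comm).trans sum_comm
    _ = ∑ k ∈ s, star (∑ i, (c k i)ᴴ *ᵥ v i) ⬝ᵥ ∑ j, (c k j)ᴴ *ᵥ v j := by
        simp only [star_sum, sum_dotProduct, dotProduct_sum]
        exact sum_congr rfl fun k _ => sum_comm
    _ ≥ 0 := sum_nonneg fun k _ => dotProduct_star_self_nonneg _

/-- for `V(z) = [[-d_{p-1}(z), -b_{p-1}d_p(z)], [e_{p-1}(z), b_{p-1}e_p(z)]]`
and `J = [[0,1],[-1,0]]`: `det V(z) = 1`; for `z ≠ conj w` the kernel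
`K_V(z,w) = (J - V(z)JV(w)^*)/(z - conj w)` equals `Σ_{k<p} c_k(z)c_k(w)^*` with
`c_k(z) = (d_k(z), -e_k(z))ᵀ`; `K_V` is a positive semidefinite kernel; and
`V(x)JV(x)^* = J` for real `x`. -/
theorem V_J_unitary_and_kernel (p : ℕ) (hp : 1 ≤ p) (s₀ : ℝ) (hs₀ : 0 < s₀)
    (a b : ℕ → ℝ) (hb : ∀ k < p, 0 < b k)
    (e d : ℕ → ℂ → ℂ)
    (he0 : ∀ z : ℂ, e 0 z = 1 / (Real.sqrt s₀ : ℂ))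
    (he1 : ∀ z : ℂ, e 1 z = (z - (a 0 : ℂ)) / ((b 0 : ℂ) * (Real.sqrt s₀ : ℂ)))
    (hd0 : ∀ z : ℂ, d 0 z = 0)
    (hd1 : ∀ z : ℂ, d 1 z = (Real.sqrt s₀ : ℂ) / (b 0 : ℂ))
    (hrecE : ∀ k, 1 ≤ k → k ≤ p - 1 → ∀ z : ℂ,
      (b (k - 1) : ℂ) * e (k - 1) z + (a k : ℂ) * e k z + (b k : ℂ) * e (k + 1) z =
        z * e k z)
    (hrecD : ∀ k, 1 ≤ k → k ≤ p - 1 → ∀ z : ℂ,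
      (b (k - 1) : ℂ) * d (k - 1) z + (a k : ℂ) * d k z + (b k : ℂ) * d (k + 1) z =
        z * d k z)
    (V : ℂ → Matrix (Fin 2) (Fin 2) ℂ)
    (hV : ∀ z : ℂ, V z =
      !![-d (p - 1) z, -(b (p - 1) : ℂ) * d p z; e (p - 1) z, (b (p - 1) : ℂ) * e p z])
    (J : Matrix (Fin 2) (Fin 2) ℂ) (hJ : J = !![0, 1; -1, 0]) :
    (∀ z : ℂ, (V z).det = 1) ∧
    (∀ z w : ℂ, z ≠ (starRingEnd ℂ) w →
      (1 / (z - (starRingEnd ℂ) w)) • (J - V z * J * (V w)ᴴ) =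
        ∑ k ∈ Finset.range p,
          (!![d k z; -e k z] : Matrix (Fin 2) (Fin 1) ℂ) *
            (!![d k w; -e k w] : Matrix (Fin 2) (Fin 1) ℂ)ᴴ) ∧
    (∀ (m : ℕ) (zs : Fin m → ℂ), (∀ i j, zs i ≠ (starRingEnd ℂ) (zs j)) →
      ∀ v : Fin m → Fin 2 → ℂ,
        0 ≤ ∑ i, ∑ j,
          star (v i) ⬝ᵥ
            (((1 / (zs i - (starRingEnd ℂ) (zs j))) •
              (J - V (zs i) * J * (V (zs j))ᴴ)).mulVec (v j))) ∧
    (∀ x : ℝ, V (x : ℂ) * J * (V (x : ℂ))ᴴ = J) := by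
  obtain ⟨n, rfl⟩ : ∃ n, p = n + 1 := ⟨p - 1, (Nat.sub_add_cancel hp).symm⟩
  simp only [Nat.add_sub_cancel] at hrecE hrecD hV
  have hE : ∀ z, SolvesJacobiRecurrence a b n z (e · z) :=
    fun z k h₁ h₂ => hrecE k h₁ h₂ z
  have hD : ∀ z, SolvesJacobiRecurrence a b n z (d · z) :=
    fun z k h₁ h₂ => hrecD k h₁ h₂ z
  have key : ∀ z w, J - V z * J * (V w)ᴴ = (z - starRingEnd ℂ w) • ∑ k ∈ range (n + 1),
      (!![d k z; -e k z] : Matrix (Fin 2) (Fin 1) ℂ) * (!![d k w; -e k w])ᴴ := by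
    intro z w
    obtain ⟨hdd, hde, hed, hee⟩ :=
      jacobiBoundary_of_initial hs₀ (hb 0 n.succ_pos).ne' he0 he1 hd0 hd1 z w
    simpa only [hV, hJ] using
      J_sub_mul_J_mul_conjTranspose_eq_smul_sum (hD z) (hE z) (hD w) (hE w) hdd hde hed hee
  have kernel : ∀ z w, z ≠ starRingEnd ℂ w →
      (1 / (z - starRingEnd ℂ w)) • (J - V z * J * (V w)ᴴ) = ∑ k ∈ range (n + 1),
        (!![d k z; -e k z] : Matrix (Fin 2) (Fin 1) ℂ) * (!![d k w; -e k w])ᴴ := by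
    intro z w hzw
    rw [key, smul_smul, one_div, inv_mul_cancel₀ (sub_ne_zero.2 hzw), one_smul]
  refine ⟨fun z => ?_, kernel, fun m zs hzs v => ?_, fun x => ?_⟩
  · rw [hV, det_eq_jacobiWronskian b n (d · z) (e · z),
      jacobiWronskian_eq_jacobiWronskian_zero (hD z) (hE z)]
    exact jacobiWronskian_zero_eq_one hs₀ (hb 0 n.succ_pos).ne' (hd0 z) (hd1 z) (he0 z)
  · simp_rw [kernel _ _ (hzs _ _)]
    exact sum_dotProduct_sum_mul_conjTranspose_mulVec_nonneg _ _ v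
  · have h := key x x
    rw [Complex.conj_ofReal, sub_self, zero_smul, sub_eq_zero] at h
    exact h.symm
end
end

section
/- With the polynomials e_k, d_k (k = 0,…,p) defined by the three-term recurrences, the following four identities hold for all z ∈ ℂ: b_{p−1}·(d_p(z)d_{p−1}(0) − d_{p−1}(z)d_p(0)) = z·Σ_{k=0}^{p−1} d_k(z)d_k(0); b_{p−1}·(d_p(z)e_{p−1}(0) − d_{p−1}(z)e_p(0)) = 1 + z·Σ_{k=0}^{p−1} d_k(z)e_k(0); b_{p−1}·(e_{p−1}(z)d_p(0) − e_p(z)d_{p−1}(0)) = 1 − z·Σ_{k=0}^{p−1} e_k(z)d_k(0); and b_{p−1}·(e_{p−1}(z)e_p(0) − e_p(z)e_{p−1}(0)) = −z·Σ_{k=0}^{p−1} e_k(z)e_k(0). (These are the entries of V(z)·V(0)^{−1}, where V(z) = [[−d_{p−1}(z), −b_{p−1}d_p(z)], [e_{p−1}(z), b_{p−1}e_p(z)]].) -/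
/-!
Every pair of solutions `u` (at spectral parameter `z`) and `v` (at `w`) of the three-term
recurrence satisfies the discrete Green formula: the increment of their Casoratian from `n` to
`n + 1` is `(z - w) u_{n+1} v_{n+1}`. Telescoping from the initial Casoratians, which are read off
from `e₀, e₁, d₀, d₁`, gives all four identities at once with `w = 0`.
-/

open Finset

section ThreeTerm

variable {R : Type*} [CommRing R]

/-- `u` solves `b_{k-1} u_{k-1} + a_k u_k + b_k u_{k+1} = z u_k` for `1 ≤ k ≤ n`. -/
def SolvesThreeTerm (a b : ℕ → R) (z : R) (n : ℕ) (u : ℕ → R) : Prop :=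
  ∀ j < n, b j * u j + a (j + 1) * u (j + 1) + b (j + 1) * u (j + 2) = z * u (j + 1)

def casoratian (b u v : ℕ → R) (n : ℕ) : R :=
  b n * (u (n + 1) * v n - u n * v (n + 1))

theorem casoratian_eq_add_sum {a b u v : ℕ → R} {z w : R} {n : ℕ}
    (hu : SolvesThreeTerm a b z n u) (hv : SolvesThreeTerm a b w n v) :
    casoratian b u v n =
      casoratian b u v 0 + (z - w) * ∑ k ∈ range n, u (k + 1) * v (k + 1) := by
  induction n with
  | zero => simp
  | succ n ih =>
    rw [sum_range_succ, mul_add, ← add_assoc,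
      ← ih (fun j hj ↦ hu j (by omega)) (fun j hj ↦ hv j (by omega))]
    unfold casoratian
    linear_combination v (n + 1) * hu n n.lt_succ_self - u (n + 1) * hv n n.lt_succ_self

end ThreeTerm

/-- four Christoffel–Darboux-type identities expressing the entries of
`V(z)·V(0)⁻¹` (where `V(z) = [[-d_{p-1}(z), -b_{p-1}d_p(z)], [e_{p-1}(z), b_{p-1}e_p(z)]]`)
as sums of products of the polynomials of the first and second kind. -/
theorem entries_of_V_times_V0_inv (p : ℕ) (hp : 1 ≤ p) (s₀ : ℝ) (hs₀ : 0 < s₀)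
    (a b : ℕ → ℝ) (hb : ∀ k < p, 0 < b k)
    (e d : ℕ → ℂ → ℂ)
    (he0 : ∀ z : ℂ, e 0 z = 1 / (Real.sqrt s₀ : ℂ))
    (he1 : ∀ z : ℂ, e 1 z = (z - (a 0 : ℂ)) / ((b 0 : ℂ) * (Real.sqrt s₀ : ℂ)))
    (hd0 : ∀ z : ℂ, d 0 z = 0)
    (hd1 : ∀ z : ℂ, d 1 z = (Real.sqrt s₀ : ℂ) / (b 0 : ℂ))
    (hrecE : ∀ k, 1 ≤ k → k ≤ p - 1 → ∀ z : ℂ,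
      (b (k - 1) : ℂ) * e (k - 1) z + (a k : ℂ) * e k z + (b k : ℂ) * e (k + 1) z =
        z * e k z)
    (hrecD : ∀ k, 1 ≤ k → k ≤ p - 1 → ∀ z : ℂ,
      (b (k - 1) : ℂ) * d (k - 1) z + (a k : ℂ) * d k z + (b k : ℂ) * d (k + 1) z =
        z * d k z) :
    ∀ z : ℂ,
      ((b (p - 1) : ℂ) * (d p z * d (p - 1) 0 - d (p - 1) z * d p 0) =
        z * ∑ k ∈ Finset.range p, d k z * d k 0) ∧
      ((b (p - 1) : ℂ) * (d p z * e (p - 1) 0 - d (p - 1) z * e p 0) =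
        1 + z * ∑ k ∈ Finset.range p, d k z * e k 0) ∧
      ((b (p - 1) : ℂ) * (e (p - 1) z * d p 0 - e p z * d (p - 1) 0) =
        1 - z * ∑ k ∈ Finset.range p, e k z * d k 0) ∧
      ((b (p - 1) : ℂ) * (e (p - 1) z * e p 0 - e p z * e (p - 1) 0) =
        -(z * ∑ k ∈ Finset.range p, e k z * e k 0)) := by
  obtain ⟨n, rfl⟩ := Nat.exists_eq_add_of_le' hp
  have hs : (Real.sqrt s₀ : ℂ) ≠ 0 := by exact_mod_cast (Real.sqrt_pos.mpr hs₀).ne'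
  have hb0 : (b 0 : ℂ) ≠ 0 := by exact_mod_cast (hb 0 n.succ_pos).ne'
  have solE (z : ℂ) : SolvesThreeTerm (fun k ↦ (a k : ℂ)) (fun k ↦ (b k : ℂ)) z n (e · z) :=
    fun j hj ↦ by simpa using hrecE (j + 1) (by omega) (by omega) z
  have solD (z : ℂ) : SolvesThreeTerm (fun k ↦ (a k : ℂ)) (fun k ↦ (b k : ℂ)) z n (d · z) :=
    fun j hj ↦ by simpa using hrecD (j + 1) (by omega) (by omega) z
  intro z
  -- The initial Casoratians, each written with the `k = 0` term of the corresponding sum.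
  have initDD : (b 0 : ℂ) * (d 1 z * d 0 0 - d 0 z * d 1 0) = z * (d 0 z * d 0 0) := by
    simp [hd0]
  have initDE : (b 0 : ℂ) * (d 1 z * e 0 0 - d 0 z * e 1 0) = 1 + z * (d 0 z * e 0 0) := by
    rw [hd0, hd1, he0]
    field_simp
    ring
  have initED : (b 0 : ℂ) * (e 1 z * d 0 0 - e 0 z * d 1 0) = -1 + z * (e 0 z * d 0 0) := by
    rw [hd0, hd1, he0]
    field_simp
    ring
  have initEE : (b 0 : ℂ) * (e 1 z * e 0 0 - e 0 z * e 1 0) = z * (e 0 z * e 0 0) := by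
    rw [he0, he0, he1, he1]
    field_simp
    ring
  have hDD := casoratian_eq_add_sum (solD z) (solD 0)
  have hDE := casoratian_eq_add_sum (solD z) (solE 0)
  have hED := casoratian_eq_add_sum (solE z) (solD 0)
  have hEE := casoratian_eq_add_sum (solE z) (solE 0)
  simp only [casoratian, sub_zero] at hDD hDE hED hEE
  simp only [Nat.add_sub_cancel, sum_range_succ']
  exact ⟨by linear_combination hDD + initDD, by linear_combination hDE + initDE,
    by linear_combination -hED - initED, by linear_combination -hEE - initEE⟩
end
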